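/- arXiv:1001.4308 — 5 statements merged into one kernel-verified Lean document; each statement's English description precedes it below -/
import Mathlib

section
/- Let K(x,y) = log(|x−y|/⟨x⟩) / (1 + log⟨y⟩) for x, y ∈ ℝ². For every p ∈ [1,∞) and every ε > 0, there exist a measurable function W : ℝ² × ℝ² → ℝ with W ≥ 0 and sup_{y∈ℝ²} ‖W(·,y)‖_{L^p(ℝ²)} ≤ ε, and a constant C₀ ≥ 0, such that |K(x,y)| ≤ C₀ + W(x,y) holds for all (x,y) ∈ ℝ² × ℝ². -/
open MeasureTheory

noncomputable section

abbrev E2 := EuclideanSpace ℝ (Fin 2)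

/-- The Japanese bracket `⟨x⟩ = (1+|x|²)^{1/2}`. -/
noncomputable def jbr (x : E2) : ℝ := Real.sqrt (1 + ‖x‖ ^ 2)

/-- The kernel `K(x,y) = log(|x−y|/⟨x⟩)/(1+log⟨y⟩)`. -/
noncomputable def Kker (x y : E2) : ℝ :=
  Real.log (‖x - y‖ / jbr x) / (1 + Real.log (jbr y))

open Set Metric
open scoped ENNReal NNReal

lemma one_le_jbr (x : E2) : 1 ≤ jbr x := by
  have h : Real.sqrt 1 ≤ Real.sqrt (1 + ‖x‖ ^ 2) :=
    Real.sqrt_le_sqrt (by nlinarith [sq_nonneg ‖x‖])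
  simpa [jbr] using h

lemma jbr_pos (x : E2) : 0 < jbr x := lt_of_lt_of_le one_pos (one_le_jbr x)

lemma log_jbr_nonneg (x : E2) : 0 ≤ Real.log (jbr x) :=
  Real.log_nonneg (one_le_jbr x)

lemma log_jbr (x : E2) : Real.log (jbr x) = Real.log (1 + ‖x‖ ^ 2) / 2 :=
  Real.log_sqrt (by positivity)

/-- The base singular profile. -/
noncomputable def fsing : E2 → ℝ := (ball (0:E2) 1).indicator (fun z => -Real.log ‖z‖)

lemma fsing_nonneg (z : E2) : 0 ≤ fsing z := by
  rw [fsing]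
  apply Set.indicator_nonneg
  intro w hw
  simp only [mem_ball, dist_zero_right] at hw
  have : Real.log ‖w‖ ≤ 0 := Real.log_nonpos (norm_nonneg _) hw.le
  linarith

lemma fsing_measurable : Measurable fsing :=
  (measurable_norm.log.neg).indicator measurableSet_ball

/-- Peetre-type inequality. -/
lemma peetre (x y : E2) :
    Real.log (jbr x) ≤ Real.log 2 / 2 + Real.log (jbr y)
      + Real.log (1 + ‖x - y‖ ^ 2) / 2 := by
  have hxy : ‖x‖ ≤ ‖y‖ + ‖x - y‖ := by
    have := norm_add_le (y) (x - y); simpa using this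
  have h1 : (1:ℝ) + ‖x‖^2 ≤ 2 * ((1 + ‖y‖^2) * (1 + ‖x-y‖^2)) := by
    nlinarith [norm_nonneg x, norm_nonneg y, norm_nonneg (x - y), sq_nonneg (‖y‖ - ‖x-y‖)]
  have h2 : Real.log (1 + ‖x‖^2) ≤ Real.log 2 + Real.log (1 + ‖y‖^2)
      + Real.log (1 + ‖x-y‖^2) := by
    calc Real.log (1 + ‖x‖^2) ≤ Real.log (2 * ((1 + ‖y‖^2) * (1 + ‖x-y‖^2))) :=
          Real.log_le_log (by positivity) h1
      _ = Real.log 2 + (Real.log (1 + ‖y‖^2) + Real.log (1 + ‖x-y‖^2)) := by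
          rw [Real.log_mul (by norm_num) (by positivity),
            Real.log_mul (by positivity) (by positivity)]
      _ = _ := by ring
  rw [log_jbr, log_jbr]
  linarith

set_option maxHeartbeats 1000000 in
/-- The main pointwise bound. -/
lemma pointwise_bound {δ : ℝ} (hδ0 : 0 < δ) (hδ1 : δ ≤ 1) (x y : E2) :
    |Kker x y| ≤ (2 + 2 * Real.log 2 - Real.log δ)
      + (ball (0:E2) δ).indicator fsing (x - y) := by
  set C₀ : ℝ := 2 + 2 * Real.log 2 - Real.log δ with hC₀
  have hlogδ : Real.log δ ≤ 0 := Real.log_nonpos hδ0.le hδ1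
  have hlog2 : (0:ℝ) ≤ Real.log 2 := Real.log_nonneg one_le_two
  have hlog2' : Real.log 2 ≤ 1 := by
    have := Real.log_le_sub_one_of_pos (two_pos (α := ℝ)); linarith
  have hC₀0 : (0:ℝ) ≤ C₀ := by rw [hC₀]; linarith
  have hWnn : 0 ≤ (ball (0:E2) δ).indicator fsing (x - y) :=
    Set.indicator_nonneg (fun w _ => fsing_nonneg w) _
  set W := (ball (0:E2) δ).indicator fsing (x - y) with hW
  set a := jbr x with ha
  set b := jbr y with hb
  set D := 1 + Real.log b with hD
  have hD1 : 1 ≤ D := by have := log_jbr_nonneg y; rw [hD]; linarith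
  have hD0 : 0 < D := lt_of_lt_of_le one_pos hD1
  rcases eq_or_lt_of_le (norm_nonneg (x - y)) with h0 | hr
  · -- x = y : the kernel is log 0 / D = 0
    rw [Kker, ← h0, zero_div, Real.log_zero, zero_div, abs_zero]
    positivity
  set r := ‖x - y‖ with hrdef
  have hKker : Kker x y = (Real.log r - Real.log a) / D := by
    rw [Kker, Real.log_div (ne_of_gt hr) (ne_of_gt (jbr_pos x))]
  rw [hKker, abs_div, abs_of_pos hD0, div_le_iff₀ hD0]
  have hlogb : 0 ≤ Real.log b := log_jbr_nonneg y
  have hpeetre : Real.log a ≤ Real.log 2 / 2 + Real.log b + Real.log (1 + r ^ 2) / 2 :=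
    peetre x y
  have hC₀2 : 2 ≤ C₀ := by rw [hC₀]; linarith
  have hprod1 : 0 ≤ (C₀ - 1) * Real.log b := mul_nonneg (by linarith) hlogb
  have hprod2 : 0 ≤ W * Real.log b := mul_nonneg hWnn hlogb
  rw [abs_le]
  constructor
  · -- lower bound :  log a - log r ≤ (C₀+W)*D
    have main : Real.log a - Real.log r ≤ (C₀ + W) * D := by
      rw [hD]
      by_cases hrδ : r < δ
      · -- near the singularity
        have hmem : x - y ∈ ball (0:E2) δ := by
          simpa [mem_ball, dist_zero_right] using hrδ
        have hmem1 : x - y ∈ ball (0:E2) 1 := by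
          simp only [mem_ball, dist_zero_right]
          exact lt_of_lt_of_le hrδ hδ1
        have hWval : W = -Real.log r := by
          rw [hW, Set.indicator_of_mem hmem, fsing, Set.indicator_of_mem hmem1]
        have hlr2 : Real.log (1 + r ^ 2) ≤ Real.log 2 :=
          Real.log_le_log (by positivity) (by nlinarith [lt_of_lt_of_le hrδ hδ1])
        nlinarith [hWval]
      · -- away from the singularity
        push_neg at hrδ
        have hδr2 : (1:ℝ) + r ^ 2 ≤ 2 * r ^ 2 / δ ^ 2 := by
          rw [le_div_iff₀ (by positivity)]
          nlinarith [mul_nonneg (mul_nonneg (sub_nonneg.2 hδ1)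
              (by linarith : (0:ℝ) ≤ 1 + δ)) (sq_nonneg r),
            mul_nonneg (sub_nonneg.2 hrδ) (by linarith : (0:ℝ) ≤ r + δ)]
        have hlr2 : Real.log (1 + r ^ 2) ≤ Real.log 2 + 2 * Real.log r - 2 * Real.log δ := by
          calc Real.log (1 + r ^ 2) ≤ Real.log (2 * r ^ 2 / δ ^ 2) :=
                Real.log_le_log (by positivity) hδr2
            _ = Real.log 2 + 2 * Real.log r - 2 * Real.log δ := by
                rw [Real.log_div (by positivity) (by positivity),
                  Real.log_mul (by norm_num) (by positivity),
                  Real.log_pow, Real.log_pow]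
                push_cast; ring
        nlinarith [hWnn]
    linarith
  · -- upper bound : log r - log a ≤ (C₀+W)*D
    have hxa : ‖x‖ ≤ a := by
      have h : Real.sqrt (‖x‖ ^ 2) ≤ Real.sqrt (1 + ‖x‖ ^ 2) :=
        Real.sqrt_le_sqrt (by nlinarith)
      rwa [Real.sqrt_sq (norm_nonneg x)] at h
    have hyb : ‖y‖ ≤ b := by
      have h : Real.sqrt (‖y‖ ^ 2) ≤ Real.sqrt (1 + ‖y‖ ^ 2) :=
        Real.sqrt_le_sqrt (by nlinarith)
      rwa [Real.sqrt_sq (norm_nonneg y)] at h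
    have ha1 : 1 ≤ a := one_le_jbr x
    have hb1 : 1 ≤ b := one_le_jbr y
    have hla : 0 ≤ Real.log a := log_jbr_nonneg x
    have hrab : r ≤ 2 * a * b := by
      have h : r ≤ ‖x‖ + ‖y‖ := norm_sub_le x y
      nlinarith [mul_nonneg (by linarith : (0:ℝ) ≤ a) (by linarith : (0:ℝ) ≤ b - 1),
        mul_nonneg (by linarith : (0:ℝ) ≤ b) (by linarith : (0:ℝ) ≤ a - 1)]
    have hlogr : Real.log r ≤ Real.log 2 + Real.log a + Real.log b := by
      calc Real.log r ≤ Real.log (2 * a * b) := Real.log_le_log hr hrab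
        _ = Real.log 2 + Real.log a + Real.log b := by
            rw [Real.log_mul (by positivity) (by positivity),
              Real.log_mul (by norm_num) (by positivity)]
    have hWD : 0 ≤ W * D := mul_nonneg hWnn hD0.le
    rw [hD]
    rw [hD] at hWD
    nlinarith

/-- Dyadic annuli. -/
def Sann (k : ℕ) : Set E2 := {z | (1/2:ℝ)^(k+1) ≤ ‖z‖ ∧ ‖z‖ < (1/2:ℝ)^k}

lemma Sann_measurable (k : ℕ) : MeasurableSet (Sann k) := by
  apply MeasurableSet.inter
  · exact measurableSet_le measurable_const measurable_norm
  · exact measurableSet_lt measurable_norm measurable_const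

lemma ball_subset_cover :
    ball (0:E2) 1 ⊆ {0} ∪ ⋃ k : ℕ, Sann k := by
  intro z hz
  rcases eq_or_ne z 0 with rfl | hz0
  · exact Or.inl rfl
  right
  have hz1 : ‖z‖ < 1 := by simpa [mem_ball, dist_zero_right] using hz
  have hzpos : 0 < ‖z‖ := norm_pos_iff.2 hz0
  have hex : ∃ n : ℕ, (1/2:ℝ)^(n+1) ≤ ‖z‖ := by
    obtain ⟨n, hn⟩ := exists_pow_lt_of_lt_one hzpos (by norm_num : (1/2:ℝ) < 1)
    have hmono : (1/2:ℝ)^(n+1) ≤ (1/2:ℝ)^n :=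
      pow_le_pow_of_le_one (by norm_num) (by norm_num) (Nat.le_succ n)
    exact ⟨n, hmono.trans hn.le⟩
  classical
  set k := Nat.find hex with hk
  refine Set.mem_iUnion.2 ⟨k, Nat.find_spec hex, ?_⟩
  rcases Nat.eq_zero_or_pos k with h0 | hpos
  · rw [h0]; simpa using hz1
  · have := Nat.find_min hex (Nat.sub_lt hpos one_pos)
    push_neg at this
    have hks : k - 1 + 1 = k := Nat.succ_pred_eq_of_pos hpos
    rwa [hks] at this

lemma lint_inv_norm_lt_top :
    ∫⁻ z in ball (0:E2) 1, ENNReal.ofReal ‖z‖⁻¹ < ⊤ := by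
  set V := volume (ball (0:E2) 1) with hV
  have hVlt : V < ⊤ := measure_ball_lt_top
  have step1 : ∫⁻ z in ball (0:E2) 1, ENNReal.ofReal ‖z‖⁻¹
      ≤ ∫⁻ z in ({0} ∪ ⋃ k : ℕ, Sann k), ENNReal.ofReal ‖z‖⁻¹ :=
    lintegral_mono_set ball_subset_cover
  have step2 : ∫⁻ z in ({0} ∪ ⋃ k : ℕ, Sann k), ENNReal.ofReal ‖z‖⁻¹
      ≤ (∫⁻ z in ({0} : Set E2), ENNReal.ofReal ‖z‖⁻¹)
        + ∫⁻ z in (⋃ k : ℕ, Sann k), ENNReal.ofReal ‖z‖⁻¹ :=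
    lintegral_union_le _ _ _
  have h0 : ∫⁻ z in ({0} : Set E2), ENNReal.ofReal ‖z‖⁻¹ = 0 := by
    apply setLIntegral_measure_zero
    simp
  have step3 : ∫⁻ z in (⋃ k : ℕ, Sann k), ENNReal.ofReal ‖z‖⁻¹
      ≤ ∑' k : ℕ, ∫⁻ z in Sann k, ENNReal.ofReal ‖z‖⁻¹ := lintegral_iUnion_le _ _
  have hterm : ∀ k : ℕ, ∫⁻ z in Sann k, ENNReal.ofReal ‖z‖⁻¹
      ≤ ENNReal.ofReal (2 * (1/2:ℝ)^k) * V := by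
    intro k
    have hbd : ∫⁻ z in Sann k, ENNReal.ofReal ‖z‖⁻¹
        ≤ ∫⁻ _z in Sann k, ENNReal.ofReal ((2:ℝ)^(k+1)) := by
      apply setLIntegral_mono measurable_const
      intro z hz
      apply ENNReal.ofReal_le_ofReal
      have h1 : (0:ℝ) < (1/2:ℝ)^(k+1) := by positivity
      have h2 := hz.1
      calc ‖z‖⁻¹ ≤ ((1/2:ℝ)^(k+1))⁻¹ := by
            apply inv_anti₀ h1 h2
        _ = (2:ℝ)^(k+1) := by
            rw [← inv_pow]; norm_num
    have hvol : volume (Sann k) ≤ ENNReal.ofReal (((1/2:ℝ)^k)^2) * V := by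
      have hsub : Sann k ⊆ ball (0:E2) ((1/2:ℝ)^k) := by
        intro z hz
        simpa [mem_ball, dist_zero_right] using hz.2
      calc volume (Sann k) ≤ volume (ball (0:E2) ((1/2:ℝ)^k)) := measure_mono hsub
        _ = ENNReal.ofReal (((1/2:ℝ)^k)^(Module.finrank ℝ E2)) * V := by
            rw [hV, Measure.addHaar_ball _ _ (by positivity : (0:ℝ) ≤ (1/2:ℝ)^k)]
        _ = ENNReal.ofReal (((1/2:ℝ)^k)^2) * V := by
            rw [finrank_euclideanSpace_fin]
    calc ∫⁻ z in Sann k, ENNReal.ofReal ‖z‖⁻¹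
        ≤ ∫⁻ _z in Sann k, ENNReal.ofReal ((2:ℝ)^(k+1)) := hbd
      _ = ENNReal.ofReal ((2:ℝ)^(k+1)) * volume (Sann k) := setLIntegral_const _ _
      _ ≤ ENNReal.ofReal ((2:ℝ)^(k+1)) * (ENNReal.ofReal (((1/2:ℝ)^k)^2) * V) :=
          mul_le_mul_right hvol _
      _ = ENNReal.ofReal ((2:ℝ)^(k+1) * ((1/2:ℝ)^k)^2) * V := by
          rw [← mul_assoc, ← ENNReal.ofReal_mul (by positivity)]
      _ = ENNReal.ofReal (2 * (1/2:ℝ)^k) * V := by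
          congr 1
          apply congrArg
          have h2 : ((1/2:ℝ))^k = ((2:ℝ)^k)⁻¹ := by rw [← inv_pow]; norm_num
          rw [h2]
          field_simp
          ring
  have hsum : (∑' k : ℕ, ENNReal.ofReal (2 * (1/2:ℝ)^k) * V)
      = (∑' k : ℕ, ENNReal.ofReal (2 * (1/2:ℝ)^k)) * V := ENNReal.tsum_mul_right
  have hgeo : (∑' k : ℕ, ENNReal.ofReal (2 * (1/2:ℝ)^k))
      = 2 * ((1 : ℝ≥0∞) - 2⁻¹)⁻¹ := by
    have hco : ∀ k : ℕ, ENNReal.ofReal (2 * (1/2:ℝ)^k) = 2 * (2⁻¹ : ℝ≥0∞)^k := by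
      intro k
      rw [ENNReal.ofReal_mul (by norm_num), ENNReal.ofReal_pow (by norm_num)]
      have h12 : ENNReal.ofReal (1/2) = (2:ℝ≥0∞)⁻¹ := by
        rw [one_div, ENNReal.ofReal_inv_of_pos two_pos]
        norm_num
      rw [h12]
      norm_num
    simp_rw [hco]
    rw [ENNReal.tsum_mul_left, ENNReal.tsum_geometric]
  have hfin : (2 : ℝ≥0∞) * (1 - 2⁻¹ : ℝ≥0∞)⁻¹ < ⊤ := by
    apply ENNReal.mul_lt_top (by norm_num)
    rw [ENNReal.inv_lt_top]
    simp [ENNReal.one_sub_inv_two]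
  calc ∫⁻ z in ball (0:E2) 1, ENNReal.ofReal ‖z‖⁻¹
      ≤ (∫⁻ z in ({0} : Set E2), ENNReal.ofReal ‖z‖⁻¹)
        + ∫⁻ z in (⋃ k : ℕ, Sann k), ENNReal.ofReal ‖z‖⁻¹ := step1.trans step2
    _ = ∫⁻ z in (⋃ k : ℕ, Sann k), ENNReal.ofReal ‖z‖⁻¹ := by rw [h0, zero_add]
    _ ≤ ∑' k : ℕ, ∫⁻ z in Sann k, ENNReal.ofReal ‖z‖⁻¹ := step3
    _ ≤ ∑' k : ℕ, ENNReal.ofReal (2 * (1/2:ℝ)^k) * V := ENNReal.tsum_le_tsum hterm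
    _ = (2 * ((1 : ℝ≥0∞) - 2⁻¹)⁻¹) * V := by rw [hsum, hgeo]
    _ < ⊤ := ENNReal.mul_lt_top hfin hVlt

lemma fsing_memLp {p : ℝ} (hp : 1 ≤ p) : MemLp fsing (ENNReal.ofReal p) volume := by
  have hp0 : (0:ℝ) < p := lt_of_lt_of_le one_pos hp
  have hq0 : ENNReal.ofReal p ≠ 0 := by
    simp [ENNReal.ofReal_eq_zero, not_le, hp0]
  have hqt : ENNReal.ofReal p ≠ ⊤ := ENNReal.ofReal_ne_top
  refine ⟨fsing_measurable.aestronglyMeasurable, ?_⟩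
  rw [eLpNorm_eq_lintegral_rpow_enorm_toReal hq0 hqt, ENNReal.toReal_ofReal hp0.le]
  apply ENNReal.rpow_lt_top_of_nonneg (by positivity)
  have hpt : ∀ z : E2, (‖fsing z‖₊ : ℝ≥0∞) ^ p
      ≤ ENNReal.ofReal (p ^ p)
        * (ball (0:E2) 1).indicator (fun z => ENNReal.ofReal ‖z‖⁻¹) z := by
    intro z
    by_cases hz : z ∈ ball (0:E2) 1
    · rw [Set.indicator_of_mem hz, fsing, Set.indicator_of_mem hz]
      have hz1 : ‖z‖ < 1 := by simpa [mem_ball, dist_zero_right] using hz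
      have hlz : Real.log ‖z‖ ≤ 0 := Real.log_nonpos (norm_nonneg z) hz1.le
      have hnn : (0:ℝ) ≤ -Real.log ‖z‖ := by linarith
      rw [← enorm_eq_nnnorm, Real.enorm_eq_ofReal hnn, ENNReal.ofReal_rpow_of_nonneg hnn hp0.le,
        ← ENNReal.ofReal_mul (by positivity)]
      apply ENNReal.ofReal_le_ofReal
      rcases eq_or_lt_of_le (norm_nonneg z) with h0 | hzpos
      · rw [← h0]
        simp [Real.log_zero, Real.zero_rpow (ne_of_gt hp0)]
      · set r := ‖z‖ with hr
        have hs : (0:ℝ) < r⁻¹ := by positivity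
        have hkey : -Real.log r ≤ p * r⁻¹ ^ (1/p : ℝ) := by
          have h1 : Real.log (r⁻¹ ^ (1/p : ℝ)) = (1/p) * Real.log r⁻¹ :=
            Real.log_rpow hs _
          have h2 : Real.log (r⁻¹ ^ (1/p : ℝ)) ≤ r⁻¹ ^ (1/p : ℝ) - 1 :=
            Real.log_le_sub_one_of_pos (Real.rpow_pos_of_pos hs _)
          have h3 : Real.log r⁻¹ = p * Real.log (r⁻¹ ^ (1/p : ℝ)) := by
            rw [h1]; field_simp
          rw [← Real.log_inv, h3]
          have h4 : Real.log (r⁻¹ ^ (1/p : ℝ)) ≤ r⁻¹ ^ (1/p : ℝ) := by linarith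
          exact mul_le_mul_of_nonneg_left h4 hp0.le
        have h5 : (-Real.log r) ^ p ≤ (p * r⁻¹ ^ (1/p : ℝ)) ^ p :=
          Real.rpow_le_rpow hnn hkey hp0.le
        have h6 : (p * r⁻¹ ^ (1/p : ℝ)) ^ p = p ^ p * r⁻¹ := by
          rw [Real.mul_rpow hp0.le (Real.rpow_nonneg hs.le _),
            ← Real.rpow_mul hs.le, one_div_mul_cancel hp0.ne', Real.rpow_one]
        rw [h6] at h5
        exact h5
    · rw [Set.indicator_of_notMem hz, fsing, Set.indicator_of_notMem hz]
      simp [ENNReal.zero_rpow_of_pos hp0]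
  have hmeasI : Measurable ((ball (0:E2) 1).indicator
      (fun z : E2 => ENNReal.ofReal ‖z‖⁻¹)) :=
    (measurable_norm.inv.ennreal_ofReal).indicator measurableSet_ball
  have hne : (∫⁻ z, (‖fsing z‖₊ : ℝ≥0∞) ^ p ∂volume) < ⊤ := by
    calc ∫⁻ z, (‖fsing z‖₊ : ℝ≥0∞) ^ p ∂volume
        ≤ ∫⁻ z, ENNReal.ofReal (p ^ p)
            * (ball (0:E2) 1).indicator (fun z => ENNReal.ofReal ‖z‖⁻¹) z ∂volume :=
          lintegral_mono hpt
      _ = ENNReal.ofReal (p ^ p)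
            * ∫⁻ z, (ball (0:E2) 1).indicator (fun z => ENNReal.ofReal ‖z‖⁻¹) z ∂volume :=
          lintegral_const_mul _ hmeasI
      _ = ENNReal.ofReal (p ^ p) * ∫⁻ z in ball (0:E2) 1, ENNReal.ofReal ‖z‖⁻¹ := by
          rw [lintegral_indicator measurableSet_ball]
      _ < ⊤ := ENNReal.mul_lt_top ENNReal.ofReal_lt_top lint_inv_norm_lt_top
  exact hne.ne

/-- For every `p ∈ [1,∞)` and every `ε > 0`, there exist a nonnegative measurable
`W : ℝ²×ℝ² → ℝ` with `sup_y ‖W(·,y)‖_{L^p} ≤ ε` and a constant `C₀ ≥ 0` such that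
`|K(x,y)| ≤ C₀ + W(x,y)` for all `(x,y)`. -/
theorem stmt0 (p : ℝ) (hp : 1 ≤ p) (ε : ℝ) (hε : 0 < ε) :
    ∃ W : E2 × E2 → ℝ, Measurable W ∧ (∀ z : E2 × E2, 0 ≤ W z) ∧
      (∀ y : E2, eLpNorm (fun x => W (x, y)) (ENNReal.ofReal p) volume ≤ ENNReal.ofReal ε) ∧
      ∃ C₀ : ℝ, 0 ≤ C₀ ∧ ∀ x y : E2, |Kker x y| ≤ C₀ + W (x, y) := by
  have hp0 : (0:ℝ) < p := lt_of_lt_of_le one_pos hp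
  have hq1 : 1 ≤ ENNReal.ofReal p := by rwa [ENNReal.one_le_ofReal]
  obtain ⟨η, hη0, hη⟩ :=
    (fsing_memLp hp).eLpNorm_indicator_le hq1 ENNReal.ofReal_ne_top hε
  set V := volume (ball (0:E2) 1) with hV
  have hVlt : V < ⊤ := measure_ball_lt_top
  set T : ℝ := V.toReal + 1 with hT
  have hT0 : (0:ℝ) < T := by positivity
  set δ : ℝ := min 1 (η / T) with hδ
  have hδ0 : 0 < δ := lt_min one_pos (by positivity)
  have hδ1 : δ ≤ 1 := min_le_left _ _
  have hvol : volume (ball (0:E2) δ) ≤ ENNReal.ofReal η := by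
    rw [Measure.addHaar_ball _ _ hδ0.le, finrank_euclideanSpace_fin, ← hV]
    have hδ2 : δ ^ 2 ≤ η / T := by
      have h1 : δ ≤ η / T := min_le_right _ _
      nlinarith
    have hVT : V ≤ ENNReal.ofReal T := by
      rw [hT]
      calc V = ENNReal.ofReal V.toReal := (ENNReal.ofReal_toReal hVlt.ne).symm
        _ ≤ ENNReal.ofReal (V.toReal + 1) := ENNReal.ofReal_le_ofReal (by linarith)
    calc ENNReal.ofReal (δ ^ 2) * V ≤ ENNReal.ofReal (η / T) * ENNReal.ofReal T :=
          mul_le_mul' (ENNReal.ofReal_le_ofReal hδ2) hVT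
      _ = ENNReal.ofReal (η / T * T) := (ENNReal.ofReal_mul (by positivity)).symm
      _ = ENNReal.ofReal η := by rw [div_mul_cancel₀ _ hT0.ne']
  refine ⟨fun z => (ball (0:E2) δ).indicator fsing (z.1 - z.2), ?_, ?_, ?_, ?_⟩
  · exact (fsing_measurable.indicator measurableSet_ball).comp
      (measurable_fst.sub measurable_snd)
  · intro z
    exact Set.indicator_nonneg (fun w _ => fsing_nonneg w) _
  · intro y
    have hmp : MeasurePreserving (fun x : E2 => x - y) volume volume :=
      measurePreserving_sub_right volume y
    have hcomp : (fun x : E2 => (ball (0:E2) δ).indicator fsing (x - y))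
        = ((ball (0:E2) δ).indicator fsing) ∘ (fun x : E2 => x - y) := rfl
    rw [hcomp, eLpNorm_comp_measurePreserving
      ((fsing_measurable.indicator measurableSet_ball).aestronglyMeasurable) hmp]
    exact hη _ measurableSet_ball hvol
  · refine ⟨2 + 2 * Real.log 2 - Real.log δ, ?_, fun x y => pointwise_bound hδ0 hδ1 x y⟩
    have h1 : Real.log δ ≤ 0 := Real.log_nonpos hδ0.le hδ1
    have h2 : (0:ℝ) ≤ Real.log 2 := Real.log_nonneg one_le_two
    linarith

end
end

section
/- For every η ∈ (0,1] and all x, y ∈ ℝ² with |x−y| ≥ η, one has |log(|x−y|/⟨x⟩)| ≤ (1 + log(√3/η)) · (1 + log⟨y⟩). -/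
open MeasureTheory

noncomputable section

/-- For every `η ∈ (0,1]` and all `x, y ∈ ℝ²` with `|x−y| ≥ η`, one has
`|log(|x−y|/⟨x⟩)| ≤ (1 + log(√3/η)) · (1 + log⟨y⟩)`. -/
theorem stmt1 (η : ℝ) (hη : η ∈ Set.Ioc (0 : ℝ) 1) (x y : E2) (hxy : η ≤ ‖x - y‖) :
    |Real.log (‖x - y‖ / jbr x)| ≤
      (1 + Real.log (Real.sqrt 3 / η)) * (1 + Real.log (jbr y)) := by
  obtain ⟨hη0, hη1⟩ := hη
  have hr : (0:ℝ) < ‖x - y‖ := lt_of_lt_of_le hη0 hxy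
  set r := ‖x - y‖ with hrdef
  set A := jbr x with hAdef
  set B := jbr y with hBdef
  have hA2 : A ^ 2 = 1 + ‖x‖ ^ 2 := Real.sq_sqrt (by positivity)
  have hB2 : B ^ 2 = 1 + ‖y‖ ^ 2 := Real.sq_sqrt (by positivity)
  have hA0 : 0 ≤ A := Real.sqrt_nonneg _
  have hB0 : 0 ≤ B := Real.sqrt_nonneg _
  have hA1 : 1 ≤ A := by nlinarith [sq_nonneg ‖x‖]
  have hB1 : 1 ≤ B := by nlinarith [sq_nonneg ‖y‖]
  have hAp : (0:ℝ) < A := lt_of_lt_of_le one_pos hA1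
  have hBp : (0:ℝ) < B := lt_of_lt_of_le one_pos hB1
  have hAx : ‖x‖ ≤ A := by nlinarith [norm_nonneg x]
  have hBy : ‖y‖ ≤ B := by nlinarith [norm_nonneg y]
  -- A ≤ B + r
  have hxy' : ‖x‖ ≤ ‖y‖ + r := by
    have h := norm_sub_norm_le x y
    linarith
  have hAB : A ≤ B + r := by
    have h1 : A ≤ Real.sqrt ((B + r) ^ 2) := by
      rw [hAdef, jbr]
      apply Real.sqrt_le_sqrt
      nlinarith [norm_nonneg x, norm_nonneg y, hr.le]
    rwa [Real.sqrt_sq (by positivity)] at h1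
  -- r ≤ 2 A B
  have hrAB : r ≤ 2 * A * B := by
    have h1 : r ≤ ‖x‖ + ‖y‖ := norm_sub_le x y
    nlinarith [mul_nonneg (sub_nonneg.mpr hA1) (sub_nonneg.mpr hB1)]
  -- A/r ≤ 2 B / η
  have hArB : A / r ≤ 2 * B / η := by
    rw [div_le_div_iff₀ hr hη0]
    have hBη : η ≤ B := le_trans hη1 hB1
    nlinarith
  -- log facts
  have f1 : Real.log r - Real.log A ≤ Real.log 2 + Real.log B := by
    have h1 : Real.log (r / A) ≤ Real.log (2 * B) := by
      apply Real.log_le_log (by positivity)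
      rw [div_le_iff₀ hAp]
      nlinarith
    rwa [Real.log_div hr.ne' hAp.ne', Real.log_mul two_ne_zero hBp.ne'] at h1
  have f2 : Real.log A - Real.log r ≤ Real.log 2 + Real.log B - Real.log η := by
    have h1 : Real.log (A / r) ≤ Real.log (2 * B / η) := by
      apply Real.log_le_log (by positivity) hArB
    rwa [Real.log_div hAp.ne' hr.ne', Real.log_div (by positivity) hη0.ne',
      Real.log_mul two_ne_zero hBp.ne'] at h1
  have hlη : Real.log η ≤ 0 := Real.log_nonpos hη0.le hη1
  have hlB : 0 ≤ Real.log B := Real.log_nonneg hB1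
  have hs : 0 ≤ Real.log (Real.sqrt 3) := Real.log_nonneg (by
    rw [show (1:ℝ) = Real.sqrt 1 by simp]
    exact Real.sqrt_le_sqrt (by norm_num))
  have hcdef : Real.log (Real.sqrt 3 / η) = Real.log (Real.sqrt 3) - Real.log η :=
    Real.log_div (by positivity) hη0.ne'
  have hc : 0 ≤ Real.log (Real.sqrt 3 / η) := by rw [hcdef]; linarith
  have hclB : 0 ≤ Real.log (Real.sqrt 3 / η) * Real.log B := mul_nonneg hc hlB
  have hl2 : Real.log 2 ≤ 1 := by
    have h := Real.log_le_sub_one_of_pos (by norm_num : (0:ℝ) < 2)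
    linarith
  have hexp : (1 + Real.log (Real.sqrt 3 / η)) * (1 + Real.log B)
      = 1 + Real.log B + Real.log (Real.sqrt 3 / η)
        + Real.log (Real.sqrt 3 / η) * Real.log B := by ring
  have hcη : -Real.log η ≤ Real.log (Real.sqrt 3 / η) := by rw [hcdef]; linarith
  rw [Real.log_div hr.ne' hAp.ne', abs_le, hexp]
  constructor
  · linarith
  · linarith

end
end

section
/- Let r ∈ (2,∞). There exists a constant C = C(r) such that for every nonnegative measurable g : ℝ² → ℝ, ‖ |·|^{-1} ∗ g ‖_{L^{2r/(r−2)}(ℝ²)} ≤ C ‖g‖_{L^{r/(r−1)}(ℝ²)}, where (|·|^{-1} ∗ g)(x) = ∫_{ℝ²} |x−y|^{-1} g(y) dy. In particular, for measurable u : ℝ² → ℂ, ‖ |·|^{-1} ∗ |u|² ‖_{L^{2r/(r−2)}} ≤ C ‖u‖_{L^{2r/(r−1)}}². -/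
open MeasureTheory ENNReal NNReal Metric Set Filter Topology

noncomputable section

namespace HLSaux

def c₀ : ℝ≥0∞ := volume (ball (0:E2) 1)

lemma c0_pos : 0 < c₀ := measure_ball_pos _ _ one_pos

lemma c0_ne_top : c₀ ≠ ∞ := measure_ball_lt_top.ne

lemma finrank_E2 : Module.finrank ℝ E2 = 2 := by
  simp [finrank_euclideanSpace]

lemma meas_ball (x : E2) {R : ℝ} (hR : 0 ≤ R) :
    volume (ball x R) = ENNReal.ofReal (R ^ 2) * c₀ := by
  rw [Measure.addHaar_ball volume x hR, finrank_E2, c₀]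

lemma meas_closedBall (x : E2) {R : ℝ} (hR : 0 ≤ R) :
    volume (closedBall x R) = ENNReal.ofReal (R ^ 2) * c₀ := by
  rw [Measure.addHaar_closedBall volume x hR, finrank_E2, c₀]

lemma meas_ball_pos (x : E2) {R : ℝ} (hR : 0 < R) : 0 < volume (ball x R) :=
  measure_ball_pos _ _ hR

lemma meas_ball_ne_top (x : E2) (R : ℝ) : volume (ball x R) ≠ ∞ :=
  measure_ball_lt_top.ne

/-- restricted (rational-radius) Hardy–Littlewood maximal function -/
def maxFn (h : E2 → ℝ≥0∞) (x : E2) : ℝ≥0∞ :=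
  ⨆ q : {q : ℚ // 0 < q}, (volume (ball x ((q : ℚ) : ℝ)))⁻¹ * ∫⁻ y in ball x ((q : ℚ) : ℝ), h y

lemma measurable_ball_lintegral (h : E2 → ℝ≥0∞) (hh : Measurable h) (c : ℝ) :
    Measurable fun x : E2 => ∫⁻ y in ball x c, h y := by
  have : ∀ x : E2, ∫⁻ y in ball x c, h y = ∫⁻ y, (ball x c).indicator h y := by
    intro x
    rw [lintegral_indicator measurableSet_ball]
  simp_rw [this]
  apply Measurable.lintegral_prod_right' (f := fun p : E2 × E2 => (ball p.1 c).indicator h p.2)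
  have : (fun p : E2 × E2 => (ball p.1 c).indicator h p.2)
      = fun p : E2 × E2 => Set.indicator {p : E2 × E2 | dist p.2 p.1 < c} (fun p => h p.2) p := by
    ext p
    simp [Set.indicator, ball]
    exact if_congr Iff.rfl rfl rfl
  rw [this]
  exact Measurable.indicator (hh.comp measurable_snd)
    (measurableSet_lt (measurable_dist.comp (measurable_snd.prodMk measurable_fst)) measurable_const)

lemma maxFn_measurable (h : E2 → ℝ≥0∞) (hh : Measurable h) : Measurable (maxFn h) := by
  apply Measurable.iSup
  intro q
  have : ∀ x : E2, (volume (ball x ((q : ℚ) : ℝ)))⁻¹ = (volume (ball (0:E2) ((q : ℚ) : ℝ)))⁻¹ := by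
    intro x
    have hq : (0:ℝ) ≤ ((q : ℚ) : ℝ) := by exact_mod_cast q.2.le
    rw [meas_ball _ hq, meas_ball _ hq]
  simp_rw [this]
  exact (measurable_ball_lintegral h hh _).const_mul _

lemma setLintegral_le_maxFn (h : E2 → ℝ≥0∞) (x : E2) {ρ : ℝ} (hρ : 0 < ρ) :
    ∫⁻ y in ball x ρ, h y ≤ ENNReal.ofReal (4 * ρ ^ 2) * c₀ * maxFn h x := by
  obtain ⟨q, hq1, hq2⟩ := exists_rat_btwn (by linarith : ρ < 2 * ρ)
  have hq0 : 0 < q := by exact_mod_cast hρ.trans hq1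
  have hball : volume (ball x ((q:ℚ):ℝ)) ≠ 0 := (meas_ball_pos x (by exact_mod_cast hq0)).ne'
  have hball' : volume (ball x ((q:ℚ):ℝ)) ≠ ∞ := meas_ball_ne_top x _
  calc ∫⁻ y in ball x ρ, h y ≤ ∫⁻ y in ball x ((q:ℚ):ℝ), h y :=
        lintegral_mono_set (ball_subset_ball hq1.le)
    _ = volume (ball x ((q:ℚ):ℝ)) * ((volume (ball x ((q:ℚ):ℝ)))⁻¹ * ∫⁻ y in ball x ((q:ℚ):ℝ), h y) := by
        rw [← mul_assoc, ENNReal.mul_inv_cancel hball hball', one_mul]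
    _ ≤ ENNReal.ofReal (4 * ρ ^ 2) * c₀ * maxFn h x := by
        apply mul_le_mul'
        · rw [meas_ball _ (by positivity : (0:ℝ) ≤ ((q:ℚ):ℝ))]
          apply mul_le_mul_left
          apply ENNReal.ofReal_le_ofReal
          nlinarith [hq2, hq1, hρ]
        · exact le_iSup (fun q : {q : ℚ // 0 < q} => (volume (ball x ((q : ℚ) : ℝ)))⁻¹ * ∫⁻ y in ball x ((q : ℚ) : ℝ), h y) ⟨q, hq0⟩


lemma maxFn_weak (h : E2 → ℝ≥0∞) (t : ℝ≥0∞) :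
    volume {x : E2 | t < maxFn h x} * t ≤ 16 * ∫⁻ y, h y := by
  set I := ∫⁻ y, h y with hI
  rcases eq_top_or_lt_top I with hItop | hIlt
  · rw [hItop]
    simp [ENNReal.mul_top]
  rcases eq_or_ne t 0 with rfl | ht0
  · simp
  rcases eq_or_ne t ∞ with rfl | httop
  · have : {x : E2 | (∞:ℝ≥0∞) < maxFn h x} = ∅ := by
      ext x; simp
    rw [this]
    simp
  set S := {x : E2 | t < maxFn h x} with hS
  -- for each x in S, a good rational radius
  have key : ∀ x ∈ S, ∃ ρ : ℝ, 0 < ρ ∧ t * volume (ball x ρ) < ∫⁻ y in ball x ρ, h y := by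
    intro x hx
    rw [hS, mem_setOf_eq, maxFn, lt_iSup_iff] at hx
    obtain ⟨q, hq⟩ := hx
    refine ⟨((q:ℚ):ℝ), by exact_mod_cast q.2, ?_⟩
    have hb0 : volume (ball x ((q:ℚ):ℝ)) ≠ 0 := (meas_ball_pos x (by exact_mod_cast q.2)).ne'
    have hbt : volume (ball x ((q:ℚ):ℝ)) ≠ ∞ := meas_ball_ne_top x _
    calc t * volume (ball x ((q:ℚ):ℝ))
        < ((volume (ball x ((q:ℚ):ℝ)))⁻¹ * ∫⁻ y in ball x ((q:ℚ):ℝ), h y) * volume (ball x ((q:ℚ):ℝ)) := by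
          rw [ENNReal.mul_lt_mul_iff_left hb0 hbt]; exact hq
      _ = ∫⁻ y in ball x ((q:ℚ):ℝ), h y := by
          rw [mul_comm, ← mul_assoc, ENNReal.mul_inv_cancel hb0 hbt, one_mul]
  choose! ρ hρpos hρlt using key
  -- radii are uniformly bounded
  have hc0 : c₀ ≠ 0 := c0_pos.ne'
  set K : ℝ≥0∞ := I / (t * c₀) with hK
  have hKtop : K ≠ ∞ := by
    rw [hK]
    exact (ENNReal.div_lt_top hIlt.ne (by simp [ht0, hc0])).ne
  have hRbound : ∀ x ∈ S, ρ x ≤ Real.sqrt K.toReal := by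
    intro x hx
    have h1 : t * volume (ball x (ρ x)) ≤ I := by
      refine le_trans (hρlt x hx).le ?_
      exact setLIntegral_le_lintegral _ _
    rw [meas_ball x (hρpos x hx).le] at h1
    have h2 : ENNReal.ofReal ((ρ x) ^ 2) * (t * c₀) ≤ I := by
      calc ENNReal.ofReal ((ρ x) ^ 2) * (t * c₀) = t * (ENNReal.ofReal ((ρ x) ^ 2) * c₀) := by ring
        _ ≤ I := h1
    have h3 : ENNReal.ofReal ((ρ x) ^ 2) ≤ K := by
      rw [hK]
      exact ENNReal.le_div_iff_mul_le (Or.inl (by simp [ht0, hc0])) (Or.inl (by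
        exact ENNReal.mul_ne_top httop c0_ne_top)) |>.mpr h2
    have h4 : (ρ x) ^ 2 ≤ K.toReal := by
      have := ENNReal.toReal_mono hKtop h3
      rwa [ENNReal.toReal_ofReal (by positivity)] at this
    calc ρ x = Real.sqrt ((ρ x)^2) := (Real.sqrt_sq (hρpos x hx).le).symm
      _ ≤ Real.sqrt K.toReal := Real.sqrt_le_sqrt h4
  -- Vitali
  obtain ⟨u, huS, hudisj, hucover⟩ :=
    Vitali.exists_disjoint_subfamily_covering_enlargement_closedBall S (fun x => x) ρ
      (Real.sqrt K.toReal) hRbound 4 (by norm_num)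
  -- u is countable
  have hucnt : u.Countable := by
    have hdisj : Pairwise (Function.onFun Disjoint fun b : ↥u => closedBall (b : E2) (ρ (b : E2))) :=
      fun i j hij => hudisj i.2 j.2 (Subtype.coe_injective.ne hij)
    have := MeasureTheory.Measure.countable_meas_pos_of_disjoint_iUnion
      (μ := (volume : Measure E2))
      (As := fun b : ↥u => closedBall (b : E2) (ρ (b : E2)))
      (fun b => measurableSet_closedBall) hdisj
    have hall : {i : ↥u | 0 < volume (closedBall (i : E2) (ρ (i : E2)))} = univ := by
      ext b
      simp only [mem_setOf_eq, mem_univ, iff_true]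
      exact lt_of_lt_of_le (meas_ball_pos _ (hρpos _ (huS b.2))) (measure_mono ball_subset_closedBall)
    rw [hall, Set.countable_univ_iff] at this
    exact (Set.countable_coe_iff).mp this
  -- covering
  have hcover : S ⊆ ⋃ b ∈ u, closedBall b (4 * ρ b) := by
    intro a ha
    obtain ⟨b, hb, hsub⟩ := hucover a ha
    exact mem_biUnion hb (hsub (mem_closedBall_self (hρpos a ha).le))
  -- measure estimate
  have h5 : volume S ≤ ∑' b : ↥u, volume (closedBall (b:E2) (4 * ρ (b:E2))) :=
    le_trans (measure_mono hcover) (measure_biUnion_le _ hucnt _)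
  have h6 : ∀ b : ↥u, volume (closedBall (b:E2) (4 * ρ (b:E2)))
      ≤ 16 * (t⁻¹ * ∫⁻ y in ball (b:E2) (ρ (b:E2)), h y) := by
    intro b
    have hbpos := hρpos (b:E2) (huS b.2)
    have h7 : volume (closedBall (b:E2) (4 * ρ (b:E2))) = 16 * volume (ball (b:E2) (ρ (b:E2))) := by
      rw [meas_closedBall _ (by positivity), meas_ball _ hbpos.le]
      rw [mul_pow]
      rw [show ((4:ℝ)^2) = 16 by norm_num]
      rw [ENNReal.ofReal_mul (by norm_num)]
      rw [show ENNReal.ofReal (16:ℝ) = 16 by norm_num]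
      ring
    rw [h7]
    apply mul_le_mul_right
    have := (hρlt (b:E2) (huS b.2)).le
    calc volume (ball (b:E2) (ρ (b:E2)))
        = t⁻¹ * (t * volume (ball (b:E2) (ρ (b:E2)))) := by
          rw [← mul_assoc, ENNReal.inv_mul_cancel ht0 httop, one_mul]
      _ ≤ t⁻¹ * ∫⁻ y in ball (b:E2) (ρ (b:E2)), h y := mul_le_mul_right this _
  have h8 : ∑' b : ↥u, (∫⁻ y in ball (b:E2) (ρ (b:E2)), h y) ≤ I := by
    have hcnt : Countable ↥u := hucnt.to_subtype
    have hdisj : Pairwise (Function.onFun Disjoint fun b : ↥u => ball (b : E2) (ρ (b : E2))) := by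
      have : Pairwise (Function.onFun Disjoint fun b : ↥u => closedBall (b : E2) (ρ (b : E2))) :=
        fun i j hij => hudisj i.2 j.2 (Subtype.coe_injective.ne hij)
      intro i j hij
      exact Disjoint.mono ball_subset_closedBall ball_subset_closedBall (this hij)
    rw [← lintegral_iUnion (fun b => measurableSet_ball) hdisj]
    exact setLIntegral_le_lintegral _ _
  calc volume S * t ≤ (∑' b : ↥u, 16 * (t⁻¹ * ∫⁻ y in ball (b:E2) (ρ (b:E2)), h y)) * t := by
        exact mul_le_mul_left (le_trans h5 (ENNReal.tsum_le_tsum h6)) t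
    _ = (16 * (t⁻¹ * ∑' b : ↥u, ∫⁻ y in ball (b:E2) (ρ (b:E2)), h y)) * t := by
        rw [ENNReal.tsum_mul_left, ENNReal.tsum_mul_left]
    _ ≤ (16 * (t⁻¹ * I)) * t := by
        exact mul_le_mul_left (mul_le_mul_right (mul_le_mul_right h8 _) _) t
    _ = 16 * I * (t⁻¹ * t) := by ring
    _ = 16 * I := by rw [ENNReal.inv_mul_cancel ht0 httop, mul_one]


variable {s : ℝ}

lemma lc_Ioo (hs : 0 < s) {b : ℝ} (hb : 0 ≤ b) :
    ∫⁻ t in Ioo (0:ℝ) b, ENNReal.ofReal (s * t ^ (s-1)) = ENNReal.ofReal (b ^ s) := by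
  have hint : IntegrableOn (fun t : ℝ => s * t ^ (s-1)) (Ioo 0 b) volume := by
    have h1 : IntervalIntegrable (fun t : ℝ => t ^ (s-1)) volume 0 b :=
       intervalIntegral.intervalIntegrable_rpow' (by linarith)
    have h2 : IntegrableOn (fun t : ℝ => t ^ (s-1)) (Ioc 0 b) volume := by
      have := h1.def'
      rwa [uIoc_of_le hb] at this
    exact ((h2.mono_set Ioo_subset_Ioc_self).const_mul s)
  rw [← ofReal_integral_eq_lintegral_ofReal hint]
  · congr 1
    rw [← MeasureTheory.integral_Ioc_eq_integral_Ioo, ← intervalIntegral.integral_of_le hb]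
    rw [intervalIntegral.integral_const_mul, integral_rpow (Or.inl (by linarith))]
    rw [sub_add_cancel, Real.zero_rpow hs.ne']
    field_simp
    simp
  · filter_upwards [ae_restrict_mem measurableSet_Ioo] with t ht
    have : (0:ℝ) ≤ t ^ (s-1) := Real.rpow_nonneg ht.1.le _
    positivity

lemma lc_Ioi_top (hs : 0 < s) :
    ∫⁻ t in Ioi (0:ℝ), ENNReal.ofReal (s * t ^ (s-1)) = ∞ := by
  by_contra hne
  have hlt : (∫⁻ t in Ioi (0:ℝ), ENNReal.ofReal (s * t ^ (s-1))) ≠ ∞ := hne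
  have hmono : ∀ n : ℕ, ENNReal.ofReal ((n:ℝ) ^ s) ≤ ∫⁻ t in Ioi (0:ℝ), ENNReal.ofReal (s * t ^ (s-1)) := by
    intro n
    rw [← lc_Ioo hs (Nat.cast_nonneg n)]
    exact lintegral_mono_set Ioo_subset_Ioi_self
  have hb : ∀ n : ℕ, ((n:ℝ) ^ s) ≤ (∫⁻ t in Ioi (0:ℝ), ENNReal.ofReal (s * t ^ (s-1))).toReal := by
    intro n
    exact (ENNReal.ofReal_le_iff_le_toReal hlt).mp (hmono n)
  have : Filter.Tendsto (fun n : ℕ => ((n:ℝ) ^ s)) Filter.atTop Filter.atTop :=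
    (_root_.tendsto_rpow_atTop hs).comp tendsto_natCast_atTop_atTop
  obtain ⟨n, hn⟩ := (this.eventually_gt_atTop ((∫⁻ t in Ioi (0:ℝ), ENNReal.ofReal (s * t ^ (s-1))).toReal)).exists
  exact absurd (hb n) (not_le.mpr hn)

lemma lc_pointwise (hs : 0 < s) (c : ℝ≥0∞) :
    ∫⁻ t in Ioi (0:ℝ), (if ENNReal.ofReal t < c then ENNReal.ofReal (s * t ^ (s-1)) else 0)
      = c ^ s := by
  rcases eq_or_ne c ∞ with rfl | hc
  · have : ∀ t : ℝ, (if ENNReal.ofReal t < (∞:ℝ≥0∞) then ENNReal.ofReal (s * t ^ (s-1)) else 0)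
        = ENNReal.ofReal (s * t ^ (s-1)) := by
      intro t; simp [ENNReal.ofReal_lt_top]
    simp_rw [this]
    rw [lc_Ioi_top hs, ENNReal.top_rpow_of_pos hs]
  · have hset : ∀ t : ℝ, (if ENNReal.ofReal t < c then ENNReal.ofReal (s * t ^ (s-1)) else 0)
        = Set.indicator {t : ℝ | ENNReal.ofReal t < c} (fun t => ENNReal.ofReal (s * t ^ (s-1))) t := by
      intro t; rw [Set.indicator_apply]; rfl
    simp_rw [hset]
    have hmeas : MeasurableSet {t : ℝ | ENNReal.ofReal t < c} := by
      exact measurableSet_lt (ENNReal.measurable_ofReal.comp measurable_id) measurable_const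
    rw [lintegral_indicator hmeas, Measure.restrict_restrict hmeas]
    have hseteq : {t : ℝ | ENNReal.ofReal t < c} ∩ Ioi (0:ℝ) = Ioo (0:ℝ) c.toReal := by
      ext t
      simp only [mem_inter_iff, mem_setOf_eq, mem_Ioi, mem_Ioo]
      constructor
      · rintro ⟨h1, h2⟩
        exact ⟨h2, (ENNReal.ofReal_lt_iff_lt_toReal h2.le hc).mp h1⟩
      · rintro ⟨h1, h2⟩
        exact ⟨(ENNReal.ofReal_lt_iff_lt_toReal h1.le hc).mpr h2, h1⟩
    rw [hseteq, lc_Ioo hs ENNReal.toReal_nonneg]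
    rw [← ENNReal.ofReal_rpow_of_nonneg ENNReal.toReal_nonneg hs.le, ENNReal.ofReal_toReal hc]

lemma layercake (F : E2 → ℝ≥0∞) (hF : Measurable F) (hs : 0 < s) :
    ∫⁻ x, F x ^ s
      = ∫⁻ t in Ioi (0:ℝ), ENNReal.ofReal (s * t ^ (s-1)) * volume {x : E2 | ENNReal.ofReal t < F x} := by
  have hWmeas : Measurable (fun p : ℝ × E2 =>
      if ENNReal.ofReal p.1 < F p.2 then ENNReal.ofReal (s * p.1 ^ (s-1)) else 0) := by
    apply Measurable.ite
    · exact measurableSet_lt (ENNReal.measurable_ofReal.comp measurable_fst) (hF.comp measurable_snd)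
    · exact ENNReal.measurable_ofReal.comp ((measurable_const.mul ((measurable_fst).pow measurable_const)))
    · exact measurable_const
  have hswap := lintegral_lintegral_swap (μ := volume.restrict (Ioi (0:ℝ))) (ν := (volume : Measure E2))
    (f := fun t x => if ENNReal.ofReal t < F x then ENNReal.ofReal (s * t ^ (s-1)) else 0)
    hWmeas.aemeasurable
  calc ∫⁻ x, F x ^ s
      = ∫⁻ x, ∫⁻ t in Ioi (0:ℝ), (if ENNReal.ofReal t < F x then ENNReal.ofReal (s * t ^ (s-1)) else 0) := by
        congr 1; ext x; rw [lc_pointwise hs (F x)]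
    _ = ∫⁻ t in Ioi (0:ℝ), ∫⁻ x, (if ENNReal.ofReal t < F x then ENNReal.ofReal (s * t ^ (s-1)) else 0) := hswap.symm
    _ = ∫⁻ t in Ioi (0:ℝ), ENNReal.ofReal (s * t ^ (s-1)) * volume {x : E2 | ENNReal.ofReal t < F x} := by
        apply lintegral_congr
        intro t
        have : ∀ x : E2, (if ENNReal.ofReal t < F x then ENNReal.ofReal (s * t ^ (s-1)) else 0)
            = Set.indicator {x : E2 | ENNReal.ofReal t < F x} (fun _ => ENNReal.ofReal (s * t ^ (s-1))) x := by
          intro x; rw [Set.indicator_apply]; rfl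
        simp_rw [this]
        rw [lintegral_indicator (measurableSet_lt measurable_const hF), setLIntegral_const]



lemma maxFn_add (h₁ h₂ : E2 → ℝ≥0∞) (hm : Measurable h₁) :
    ∀ x, maxFn (fun y => h₁ y + h₂ y) x ≤ maxFn h₁ x + maxFn h₂ x := by
  intro x
  apply iSup_le
  intro q
  rw [lintegral_add_left hm, mul_add]
  exact add_le_add (le_iSup (fun q : {q : ℚ // 0 < q} =>
      (volume (ball x ((q : ℚ) : ℝ)))⁻¹ * ∫⁻ y in ball x ((q : ℚ) : ℝ), h₁ y) q)
    (le_iSup (fun q : {q : ℚ // 0 < q} =>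
      (volume (ball x ((q : ℚ) : ℝ)))⁻¹ * ∫⁻ y in ball x ((q : ℚ) : ℝ), h₂ y) q)

lemma maxFn_le_const (h : E2 → ℝ≥0∞) (τ : ℝ≥0∞) (hτ : ∀ y, h y ≤ τ) :
    ∀ x, maxFn h x ≤ τ := by
  intro x
  apply iSup_le
  intro q
  have hq0 : (0:ℝ) < ((q:ℚ):ℝ) := by exact_mod_cast q.2
  have hb0 : volume (ball x ((q:ℚ):ℝ)) ≠ 0 := (meas_ball_pos x hq0).ne'
  have hbT : volume (ball x ((q:ℚ):ℝ)) ≠ ∞ := meas_ball_ne_top x _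
  have h1 : ∫⁻ y in ball x ((q:ℚ):ℝ), h y ≤ τ * volume (ball x ((q:ℚ):ℝ)) := by
    calc ∫⁻ y in ball x ((q:ℚ):ℝ), h y ≤ ∫⁻ _ in ball x ((q:ℚ):ℝ), τ :=
          lintegral_mono hτ
      _ = τ * volume (ball x ((q:ℚ):ℝ)) := setLIntegral_const _ _
  calc (volume (ball x ((q:ℚ):ℝ)))⁻¹ * ∫⁻ y in ball x ((q:ℚ):ℝ), h y
      ≤ (volume (ball x ((q:ℚ):ℝ)))⁻¹ * (τ * volume (ball x ((q:ℚ):ℝ))) :=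
        mul_le_mul_right h1 _
    _ = τ * ((volume (ball x ((q:ℚ):ℝ)))⁻¹ * volume (ball x ((q:ℚ):ℝ))) := by ring
    _ = τ := by rw [ENNReal.inv_mul_cancel hb0 hbT, mul_one]

/-- maximal constant -/
def CM (p : ℝ) : ℝ≥0∞ := 16 * ENNReal.ofReal (2*p/(p-1)) * ENNReal.ofReal (2 ^ (p-1))

lemma CM_ne_top (p : ℝ) : CM p ≠ ∞ := by
  simp [CM, ENNReal.mul_ne_top]

lemma strong_inner {p : ℝ} (hp1 : 1 < p) (c : ℝ≥0∞) (hc : c ≠ ∞) :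
    (∫⁻ t in Ioi (0:ℝ), ENNReal.ofReal (p * t ^ (p-1)) * 16 * (ENNReal.ofReal (t/2))⁻¹ *
        (if ENNReal.ofReal (t/2) < c then c else 0))
      ≤ CM p * c ^ p := by
  rcases eq_or_ne c 0 with rfl | hc0
  · have : ∀ t : ℝ, (if ENNReal.ofReal (t/2) < (0:ℝ≥0∞) then (0:ℝ≥0∞) else 0) = 0 := by
      intro t; simp
    simp_rw [this, mul_zero, lintegral_zero]
    exact zero_le
  have hb : (0:ℝ) ≤ 2 * c.toReal := by positivity
  have hbd : ∀ᵐ t ∂(volume.restrict (Ioi (0:ℝ))),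
      ENNReal.ofReal (p * t ^ (p-1)) * 16 * (ENNReal.ofReal (t/2))⁻¹ *
        (if ENNReal.ofReal (t/2) < c then c else 0)
      ≤ Set.indicator (Ioo (0:ℝ) (2 * c.toReal)) (fun t => 16 * c * ENNReal.ofReal ((2*p) * t ^ (p-2))) t := by
    filter_upwards [ae_restrict_mem measurableSet_Ioi] with t ht
    have ht0 : (0:ℝ) < t := ht
    rcases lt_or_ge (ENNReal.ofReal (t/2)) c with hlt | hge
    · have htmem : t ∈ Ioo (0:ℝ) (2 * c.toReal) := by
        constructor
        · exact ht0
        · have := (ENNReal.ofReal_lt_iff_lt_toReal (by positivity) hc).mp hlt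
          linarith
      rw [Set.indicator_of_mem htmem, if_pos hlt]
      have h2 : (ENNReal.ofReal (t/2))⁻¹ = ENNReal.ofReal (2/t) := by
        rw [← ENNReal.ofReal_inv_of_pos (by positivity)]
        congr 1
        rw [inv_div]
      rw [h2]
      have h3 : ENNReal.ofReal (p * t ^ (p-1)) * 16 * ENNReal.ofReal (2/t) * c
          = 16 * c * (ENNReal.ofReal (p * t ^ (p-1)) * ENNReal.ofReal (2/t)) := by ring
      have hnng : (0:ℝ) ≤ p * t ^ (p-1) := by
        have := Real.rpow_nonneg ht0.le (p-1)
        nlinarith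
      rw [h3, ← ENNReal.ofReal_mul hnng]
      apply le_of_eq
      congr 2
      have e1 : t ^ (p-1) = t ^ p / t := by
        rw [Real.rpow_sub ht0, Real.rpow_one]
      have e2 : t ^ (p-2) = t ^ p / t ^ (2:ℕ) := by
        rw [Real.rpow_sub ht0, ← Real.rpow_natCast t 2]
        norm_num
      rw [e1, e2]
      field_simp
    · rw [if_neg (not_lt.mpr hge), mul_zero]
      exact zero_le
  calc (∫⁻ t in Ioi (0:ℝ), ENNReal.ofReal (p * t ^ (p-1)) * 16 * (ENNReal.ofReal (t/2))⁻¹ *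
        (if ENNReal.ofReal (t/2) < c then c else 0))
      ≤ ∫⁻ t in Ioi (0:ℝ), Set.indicator (Ioo (0:ℝ) (2 * c.toReal))
          (fun t => 16 * c * ENNReal.ofReal ((2*p) * t ^ (p-2))) t := lintegral_mono_ae hbd
    _ = ∫⁻ t in Ioo (0:ℝ) (2 * c.toReal), 16 * c * ENNReal.ofReal ((2*p) * t ^ (p-2)) := by
        rw [lintegral_indicator measurableSet_Ioo, Measure.restrict_restrict measurableSet_Ioo]
        congr 1
        rw [inter_eq_left.mpr (fun t htt => htt.1)]
    _ = 16 * c * ∫⁻ t in Ioo (0:ℝ) (2 * c.toReal), ENNReal.ofReal ((2*p) * t ^ (p-2)) := by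
        rw [lintegral_const_mul']
        exact ENNReal.mul_ne_top (by norm_num) hc
    _ ≤ CM p * c ^ p := by
        have key : ∀ t : ℝ, ENNReal.ofReal ((2*p) * t ^ (p-2))
            = ENNReal.ofReal (2*p/(p-1)) * ENNReal.ofReal ((p-1) * t ^ (p-2)) := by
          intro t
          have hp0 : p - 1 ≠ 0 := by linarith
          rw [← ENNReal.ofReal_mul (div_nonneg (by linarith) (by linarith) : (0:ℝ) ≤ 2*p/(p-1))]
          congr 1
          field_simp
        simp_rw [key]
        rw [lintegral_const_mul' _ _ (by simp)]
        rw [show (p:ℝ) - 2 = (p-1) - 1 by ring]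
        rw [lc_Ioo (by linarith) hb]
        have h4 : ENNReal.ofReal ((2 * c.toReal) ^ (p-1))
            = ENNReal.ofReal (2 ^ (p-1)) * c ^ (p-1) := by
          rw [Real.mul_rpow (by norm_num) ENNReal.toReal_nonneg, ENNReal.ofReal_mul (by positivity)]
          congr 1
          rw [← ENNReal.ofReal_rpow_of_nonneg ENNReal.toReal_nonneg (by linarith), ENNReal.ofReal_toReal hc]
        rw [h4]
        apply le_of_eq
        have h5 : c * (ENNReal.ofReal (2*p/(p-1)) * (ENNReal.ofReal (2 ^ (p-1)) * c ^ (p-1)))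
            = (ENNReal.ofReal (2*p/(p-1)) * ENNReal.ofReal (2 ^ (p-1))) * (c * c ^ (p-1)) := by ring
        have h6 : c * c ^ (p-1) = c ^ p := by
          nth_rewrite 1 [← ENNReal.rpow_one c]
          rw [← ENNReal.rpow_add _ _ hc0 hc]
          norm_num
        rw [mul_assoc, h5, h6, CM]
        ring

lemma maxFn_strong (h : E2 → ℝ≥0∞) (hh : Measurable h) (hfin : ∀ y, h y ≠ ∞)
    {p : ℝ} (hp1 : 1 < p) :
    ∫⁻ x, (maxFn h x) ^ p ≤ CM p * ∫⁻ y, h y ^ p := by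
  set H : ℝ → E2 → ℝ≥0∞ := fun t y => if ENNReal.ofReal (t/2) < h y then h y else 0 with hH
  -- distribution estimate
  have hdist : ∀ t : ℝ, 0 < t → volume {x : E2 | ENNReal.ofReal t < maxFn h x}
      ≤ 16 * (ENNReal.ofReal (t/2))⁻¹ * ∫⁻ y, H t y := by
    intro t ht
    have hsub : {x : E2 | ENNReal.ofReal t < maxFn h x}
        ⊆ {x : E2 | ENNReal.ofReal (t/2) < maxFn (H t) x} := by
      intro x hx
      simp only [mem_setOf_eq] at hx ⊢
      by_contra hcon
      push_neg at hcon
      have hsplit : ∀ y, h y = H t y + (if ENNReal.ofReal (t/2) < h y then 0 else h y) := by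
        intro y
        rw [hH]
        by_cases hy : ENNReal.ofReal (t/2) < h y <;> simp [hy]
      have h1 : maxFn h x ≤ maxFn (H t) x + maxFn (fun y => if ENNReal.ofReal (t/2) < h y then 0 else h y) x := by
        have hHm0 : Measurable (H t) :=
          Measurable.ite (measurableSet_lt measurable_const hh) hh measurable_const
        have h0 := maxFn_add (H t) (fun y => if ENNReal.ofReal (t/2) < h y then 0 else h y) hHm0 x
        rwa [show (fun y => H t y + (if ENNReal.ofReal (t/2) < h y then 0 else h y)) = h
          from funext fun y => (hsplit y).symm] at h0
      have h2 : maxFn (fun y => if ENNReal.ofReal (t/2) < h y then 0 else h y) x ≤ ENNReal.ofReal (t/2) := by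
        apply maxFn_le_const
        intro y
        by_cases hy : ENNReal.ofReal (t/2) < h y <;> simp [hy]
        exact le_of_not_gt hy
      have h3 : maxFn h x ≤ ENNReal.ofReal (t/2) + ENNReal.ofReal (t/2) :=
        le_trans h1 (add_le_add hcon h2)
      rw [← ENNReal.ofReal_add (by positivity) (by positivity)] at h3
      have : t/2 + t/2 = t := by ring
      rw [this] at h3
      exact absurd hx (not_lt.mpr h3)
    have hweak := maxFn_weak (H t) (ENNReal.ofReal (t/2))
    have ht2 : ENNReal.ofReal (t/2) ≠ 0 := by
      simp only [ne_eq, ENNReal.ofReal_eq_zero, not_le]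
      positivity
    have ht2' : ENNReal.ofReal (t/2) ≠ ∞ := ENNReal.ofReal_ne_top
    calc volume {x : E2 | ENNReal.ofReal t < maxFn h x}
        ≤ volume {x : E2 | ENNReal.ofReal (t/2) < maxFn (H t) x} := measure_mono hsub
      _ = volume {x : E2 | ENNReal.ofReal (t/2) < maxFn (H t) x} * ENNReal.ofReal (t/2) * (ENNReal.ofReal (t/2))⁻¹ := by
          rw [mul_assoc, ENNReal.mul_inv_cancel ht2 ht2', mul_one]
      _ ≤ (16 * ∫⁻ y, H t y) * (ENNReal.ofReal (t/2))⁻¹ := mul_le_mul_left hweak _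
      _ = 16 * (ENNReal.ofReal (t/2))⁻¹ * ∫⁻ y, H t y := by ring
  -- measurability of the kernel for swap
  have hHmeas : Measurable (fun q : ℝ × E2 => ENNReal.ofReal (p * q.1 ^ (p-1)) * 16 *
      (ENNReal.ofReal (q.1/2))⁻¹ * (if ENNReal.ofReal (q.1/2) < h q.2 then h q.2 else 0)) := by
    apply Measurable.mul
    · apply Measurable.mul
      · exact (ENNReal.measurable_ofReal.comp
          ((measurable_const.mul (measurable_fst.pow measurable_const)))).mul measurable_const
      · exact (ENNReal.measurable_ofReal.comp (measurable_fst.div measurable_const)).inv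
    · apply Measurable.ite
      · exact measurableSet_lt (ENNReal.measurable_ofReal.comp ((measurable_fst.div measurable_const)))
          (hh.comp measurable_snd)
      · exact hh.comp measurable_snd
      · exact measurable_const
  calc ∫⁻ x, (maxFn h x) ^ p
      = ∫⁻ t in Ioi (0:ℝ), ENNReal.ofReal (p * t ^ (p-1)) * volume {x : E2 | ENNReal.ofReal t < maxFn h x} :=
        layercake _ (maxFn_measurable h hh) (by linarith)
    _ ≤ ∫⁻ t in Ioi (0:ℝ), ENNReal.ofReal (p * t ^ (p-1)) *
          (16 * (ENNReal.ofReal (t/2))⁻¹ * ∫⁻ y, H t y) := by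
        apply lintegral_mono_ae
        filter_upwards [ae_restrict_mem measurableSet_Ioi] with t ht
        exact mul_le_mul_right (hdist t ht) _
    _ = ∫⁻ t in Ioi (0:ℝ), ∫⁻ y, ENNReal.ofReal (p * t ^ (p-1)) * 16 *
          (ENNReal.ofReal (t/2))⁻¹ * H t y := by
        apply lintegral_congr
        intro t
        have hHm : Measurable (H t) := by
          apply Measurable.ite (measurableSet_lt measurable_const hh) hh measurable_const
        rw [lintegral_const_mul (ENNReal.ofReal (p * t ^ (p-1)) * 16 * (ENNReal.ofReal (t/2))⁻¹) hHm]
        ring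
    _ = ∫⁻ y, ∫⁻ t in Ioi (0:ℝ), ENNReal.ofReal (p * t ^ (p-1)) * 16 *
          (ENNReal.ofReal (t/2))⁻¹ * H t y := by
        exact lintegral_lintegral_swap hHmeas.aemeasurable
    _ ≤ ∫⁻ y, CM p * h y ^ p := by
        apply lintegral_mono
        intro y
        exact strong_inner hp1 (h y) (hfin y)
    _ = CM p * ∫⁻ y, h y ^ p := lintegral_const_mul' _ _ (CM_ne_top p)


lemma dyadic_div_mono {R : ℝ} (hR : 0 < R) {i j : ℕ} (hij : i ≤ j) : R/2^j ≤ R/2^i :=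
  div_le_div_of_nonneg_left hR.le (by positivity) (pow_le_pow_right₀ (by norm_num) hij)

lemma exists_dyadic_down {R d : ℝ} (hd : 0 < d) (hdR : d < R) :
    ∃ k : ℕ, R/2^(k+1) ≤ d ∧ d < R/2^k := by
  have hR : 0 < R := hd.trans hdR
  have hex : ∃ n : ℕ, R/2^(n+1) ≤ d := by
    obtain ⟨n, hn⟩ := pow_unbounded_of_one_lt (R/d) (by norm_num : (1:ℝ) < 2)
    refine ⟨n, ?_⟩
    rw [div_le_iff₀ (by positivity)]
    rw [div_lt_iff₀ hd] at hn
    have h2 : (2:ℝ)^n ≤ 2^(n+1) := pow_le_pow_right₀ (by norm_num) (Nat.le_succ n)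
    nlinarith
  classical
  refine ⟨Nat.find hex, Nat.find_spec hex, ?_⟩
  rcases Nat.eq_zero_or_pos (Nat.find hex) with h0 | hpos
  · rw [h0]; simpa using hdR
  · have := Nat.find_min hex (Nat.sub_lt hpos one_pos)
    push_neg at this
    have he : Nat.find hex - 1 + 1 = Nat.find hex := Nat.succ_pred_eq_of_pos hpos
    rwa [he] at this

lemma exists_dyadic_up {R d : ℝ} (hR : 0 < R) (hdR : R ≤ d) :
    ∃ k : ℕ, 2^k * R ≤ d ∧ d < 2^(k+1) * R := by
  have hd : 0 < d := lt_of_lt_of_le hR hdR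
  have hex : ∃ n : ℕ, d < 2^(n+1) * R := by
    obtain ⟨n, hn⟩ := pow_unbounded_of_one_lt (d/R) (by norm_num : (1:ℝ) < 2)
    refine ⟨n, ?_⟩
    rw [div_lt_iff₀ hR] at hn
    have h2 : (2:ℝ)^n ≤ 2^(n+1) := pow_le_pow_right₀ (by norm_num) (Nat.le_succ n)
    nlinarith
  classical
  refine ⟨Nat.find hex, ?_, Nat.find_spec hex⟩
  rcases Nat.eq_zero_or_pos (Nat.find hex) with h0 | hpos
  · rw [h0]; simpa using hdR
  · have := Nat.find_min hex (Nat.sub_lt hpos one_pos)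
    push_neg at this
    have he : Nat.find hex - 1 + 1 = Nat.find hex := Nat.succ_pred_eq_of_pos hpos
    rwa [he] at this

variable {α : Type*} [MeasurableSpace α]

lemma holder_set (μ : Measure α) (G : α → ℝ≥0∞) (hG : Measurable G) {pp rr : ℝ}
    (hpr : pp.HolderConjugate rr) (S : Set α) :
    ∫⁻ y in S, G y ∂μ ≤ (μ S) ^ (1/rr) * (∫⁻ y, G y ^ pp ∂μ) ^ (1/pp) := by
  have h1 : ∫⁻ y in S, G y ∂μ = ∫⁻ y in S, G y * 1 ∂μ := by simp
  rw [h1]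
  calc ∫⁻ y in S, G y * 1 ∂μ
      ≤ (∫⁻ y in S, G y ^ pp ∂μ) ^ (1/pp) * (∫⁻ y in S, (1:ℝ≥0∞) ^ rr ∂μ) ^ (1/rr) :=
        ENNReal.lintegral_mul_le_Lp_mul_Lq _ hpr hG.aemeasurable aemeasurable_const
    _ ≤ (∫⁻ y, G y ^ pp ∂μ) ^ (1/pp) * (μ S) ^ (1/rr) := by
        apply mul_le_mul'
        · exact ENNReal.rpow_le_rpow (setLIntegral_le_lintegral _ _)
            (le_of_lt (by have := hpr.pos; positivity) : (0:ℝ) ≤ 1/pp)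
        · apply le_of_eq
          congr 1
          simp [ENNReal.one_rpow]
    _ = (μ S) ^ (1/rr) * (∫⁻ y, G y ^ pp ∂μ) ^ (1/pp) := mul_comm _ _


section Annuli

variable (G : E2 → ℝ≥0∞) (x : E2) (R : ℝ)

/-- inner dyadic annuli -/
def Ann (k : ℕ) : Set E2 := (fun y => ‖x - y‖) ⁻¹' (Ico (R/2^(k+1)) (R/2^k))

/-- outer dyadic annuli -/
def Bnn (k : ℕ) : Set E2 := (fun y => ‖x - y‖) ⁻¹' (Ico (2^k * R) (2^(k+1) * R))

lemma measurable_normsub : Measurable (fun y : E2 => ‖x - y‖) :=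
  (continuous_const.sub continuous_id).norm.measurable

lemma Ann_measurable (k : ℕ) : MeasurableSet (Ann x R k) :=
  (measurable_normsub x) measurableSet_Ico

lemma Bnn_measurable (k : ℕ) : MeasurableSet (Bnn x R k) :=
  (measurable_normsub x) measurableSet_Ico

lemma Ann_disjoint (hR : 0 < R) : Pairwise (Function.onFun Disjoint (Ann x R)) := by
  intro k l hkl
  apply Disjoint.preimage
  rw [Set.Ico_disjoint_Ico]
  rcases hkl.lt_or_gt with h | h
  · -- k < l : min (R/2^k) (R/2^l) = R/2^l ≤ R/2^(k+1) ≤ max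
    have h1 : R/2^l ≤ R/2^(k+1) := dyadic_div_mono hR h
    have h2 : min (R/2^k) (R/2^l) ≤ R/2^l := min_le_right _ _
    have h3 : R/2^(k+1) ≤ max (R/2^(k+1)) (R/2^(l+1)) := le_max_left _ _
    linarith
  · have h1 : R/2^k ≤ R/2^(l+1) := dyadic_div_mono hR h
    have h2 : min (R/2^k) (R/2^l) ≤ R/2^k := min_le_left _ _
    have h3 : R/2^(l+1) ≤ max (R/2^(k+1)) (R/2^(l+1)) := le_max_right _ _
    linarith

lemma Bnn_disjoint (hR : 0 < R) : Pairwise (Function.onFun Disjoint (Bnn x R)) := by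
  intro k l hkl
  apply Disjoint.preimage
  rw [Set.Ico_disjoint_Ico]
  have hmono : ∀ {i j : ℕ}, i ≤ j → (2:ℝ)^i * R ≤ 2^j * R := fun hij =>
    mul_le_mul_of_nonneg_right (pow_le_pow_right₀ (by norm_num) hij) hR.le
  rcases hkl.lt_or_gt with h | h
  · have h1 : (2:ℝ)^(k+1) * R ≤ 2^l * R := hmono h
    have h2 : min ((2:ℝ)^(k+1) * R) (2^(l+1) * R) ≤ (2:ℝ)^(k+1)*R := min_le_left _ _
    have h3 : (2:ℝ)^l * R ≤ max ((2:ℝ)^k * R) (2^l * R) := le_max_right _ _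
    linarith
  · have h1 : (2:ℝ)^(l+1) * R ≤ 2^k * R := hmono h
    have h2 : min ((2:ℝ)^(k+1) * R) (2^(l+1) * R) ≤ (2:ℝ)^(l+1)*R := min_le_right _ _
    have h3 : (2:ℝ)^k * R ≤ max ((2:ℝ)^k * R) (2^l * R) := le_max_left _ _
    linarith

lemma Ann_union (hR : 0 < R) : (⋃ k, Ann x R k) = ball x R \ {x} := by
  ext y
  simp only [mem_iUnion, Ann, mem_preimage, mem_Ico, mem_diff, mem_ball, mem_singleton_iff]
  constructor
  · rintro ⟨k, hk1, hk2⟩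
    have hpos : 0 < ‖x - y‖ := lt_of_lt_of_le (by positivity) hk1
    constructor
    · rw [dist_comm, dist_eq_norm]
      calc ‖x - y‖ < R/2^k := hk2
        _ ≤ R/2^0 := dyadic_div_mono hR (Nat.zero_le k)
        _ = R := by norm_num
    · intro hxy
      rw [hxy] at hpos
      simp at hpos
  · rintro ⟨h1, h2⟩
    rw [dist_comm, dist_eq_norm] at h1
    have hpos : 0 < ‖x - y‖ := by
      rw [norm_pos_iff, sub_ne_zero]
      exact fun he => h2 he.symm
    exact exists_dyadic_down hpos h1

lemma Bnn_union (hR : 0 < R) : (⋃ k, Bnn x R k) = (ball x R)ᶜ := by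
  ext y
  simp only [mem_iUnion, Bnn, mem_preimage, mem_Ico, mem_compl_iff, mem_ball]
  rw [dist_comm, dist_eq_norm, not_lt]
  constructor
  · rintro ⟨k, hk1, hk2⟩
    calc R = 2^0 * R := by norm_num
      _ ≤ 2^k * R := mul_le_mul_of_nonneg_right (pow_le_pow_right₀ (by norm_num) (Nat.zero_le k)) hR.le
      _ ≤ ‖x - y‖ := hk1
  · intro h
    exact exists_dyadic_up hR h

end Annuli

lemma near_bound (G : E2 → ℝ≥0∞) (hG : Measurable G) (x : E2) {R : ℝ} (hR : 0 < R) :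
    ∫⁻ y in ball x R, (ENNReal.ofReal ‖x - y‖)⁻¹ * G y
      ≤ 16 * c₀ * ENNReal.ofReal R * maxFn G x := by
  have hstep : ∫⁻ y in ball x R, (ENNReal.ofReal ‖x - y‖)⁻¹ * G y
      = ∑' k : ℕ, ∫⁻ y in Ann x R k, (ENNReal.ofReal ‖x - y‖)⁻¹ * G y := by
    rw [← lintegral_iUnion (Ann_measurable x R) (Ann_disjoint x R hR)]
    have : volume.restrict (ball x R) = volume.restrict (⋃ k, Ann x R k) := by
      rw [Ann_union x R hR]
      refine (Measure.restrict_congr_set ?_).symm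
      exact diff_null_ae_eq_self (by simp)
    rw [this]
  rw [hstep]
  have hterm : ∀ k : ℕ, ∫⁻ y in Ann x R k, (ENNReal.ofReal ‖x - y‖)⁻¹ * G y
      ≤ ENNReal.ofReal (8 * R * (1/2)^k) * (c₀ * maxFn G x) := by
    intro k
    have hk1 : (0:ℝ) < R/2^(k+1) := by positivity
    have hbound : ∀ y ∈ Ann x R k, (ENNReal.ofReal ‖x - y‖)⁻¹ * G y
        ≤ (ENNReal.ofReal (R/2^(k+1)))⁻¹ * G y := by
      intro y hy
      apply mul_le_mul_left
      exact ENNReal.inv_le_inv' (ENNReal.ofReal_le_ofReal hy.1)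
    calc ∫⁻ y in Ann x R k, (ENNReal.ofReal ‖x - y‖)⁻¹ * G y
        ≤ ∫⁻ y in Ann x R k, (ENNReal.ofReal (R/2^(k+1)))⁻¹ * G y :=
          setLIntegral_mono (measurable_const.mul hG) hbound
      _ = (ENNReal.ofReal (R/2^(k+1)))⁻¹ * ∫⁻ y in Ann x R k, G y :=
          lintegral_const_mul _ hG
      _ ≤ (ENNReal.ofReal (R/2^(k+1)))⁻¹ * ∫⁻ y in ball x (R/2^k), G y := by
          apply mul_le_mul_right
          apply lintegral_mono_set
          intro y hy
          rw [mem_ball, dist_comm, dist_eq_norm]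
          exact hy.2
      _ ≤ (ENNReal.ofReal (R/2^(k+1)))⁻¹ * (ENNReal.ofReal (4 * (R/2^k) ^ 2) * c₀ * maxFn G x) :=
          mul_le_mul_right (setLintegral_le_maxFn G x (by positivity)) _
      _ = ((ENNReal.ofReal (R/2^(k+1)))⁻¹ * ENNReal.ofReal (4 * (R/2^k) ^ 2)) * (c₀ * maxFn G x) := by
          ring
      _ = ENNReal.ofReal (8 * R * (1/2)^k) * (c₀ * maxFn G x) := by
          congr 1
          rw [← ENNReal.ofReal_inv_of_pos hk1, ← ENNReal.ofReal_mul (by positivity)]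
          congr 1
          rw [one_div_pow]
          field_simp
          ring
  calc ∑' k : ℕ, ∫⁻ y in Ann x R k, (ENNReal.ofReal ‖x - y‖)⁻¹ * G y
      ≤ ∑' k : ℕ, ENNReal.ofReal (8 * R * (1/2)^k) * (c₀ * maxFn G x) :=
        ENNReal.tsum_le_tsum hterm
    _ = (∑' k : ℕ, ENNReal.ofReal (8 * R) * (ENNReal.ofReal (1/2))^k) * (c₀ * maxFn G x) := by
        rw [ENNReal.tsum_mul_right]
        congr 1
        apply tsum_congr
        intro k
        rw [← ENNReal.ofReal_pow (by norm_num), ← ENNReal.ofReal_mul (by positivity)]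
    _ = ENNReal.ofReal (8 * R) * (1 - ENNReal.ofReal (1/2))⁻¹ * (c₀ * maxFn G x) := by
        rw [ENNReal.tsum_mul_left, ENNReal.tsum_geometric]
    _ = 16 * c₀ * ENNReal.ofReal R * maxFn G x := by
        have h1 : ENNReal.ofReal (1/2 : ℝ) = 2⁻¹ := by
          rw [ENNReal.ofReal_div_of_pos (by norm_num)]
          norm_num
        rw [h1, ENNReal.one_sub_inv_two, inv_inv]
        have h2 : ENNReal.ofReal (8 * R) = 8 * ENNReal.ofReal R := by
          rw [ENNReal.ofReal_mul (by norm_num)]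
          norm_num
        rw [h2]
        ring


def qgeo (rr : ℝ) : ℝ≥0∞ := (2:ℝ≥0∞)^(2/rr - 1)

def Cfar (rr : ℝ) : ℝ≥0∞ := (1 - qgeo rr)⁻¹ * (2:ℝ≥0∞)^(2/rr) * c₀^(1/rr)

lemma qgeo_lt_one {rr : ℝ} (hrr : 2 < rr) : qgeo rr < 1 :=
  ENNReal.rpow_lt_one_of_one_lt_of_neg (by norm_num) (by
    have h1 : 2/rr < 1 := (div_lt_one (by linarith)).mpr hrr
    linarith)

lemma Cfar_ne_top {rr : ℝ} (hrr : 2 < rr) : Cfar rr ≠ ∞ := by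
  apply ENNReal.mul_ne_top
  apply ENNReal.mul_ne_top
  · rw [ENNReal.inv_ne_top]
    intro h0
    rw [tsub_eq_zero_iff_le] at h0
    exact absurd h0 (not_le.mpr (qgeo_lt_one hrr))
  · exact ENNReal.rpow_ne_top_of_nonneg (by positivity) (by norm_num)
  · exact ENNReal.rpow_ne_top_of_nonneg (by positivity) c0_ne_top

lemma far_bound (G : E2 → ℝ≥0∞) (hG : Measurable G) (x : E2) {R : ℝ} (hR : 0 < R)
    {pp rr : ℝ} (hpr : pp.HolderConjugate rr) (hrr : 2 < rr) :
    ∫⁻ y in (ball x R)ᶜ, (ENNReal.ofReal ‖x - y‖)⁻¹ * G y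
      ≤ Cfar rr * (ENNReal.ofReal R)^(2/rr - 1) * (∫⁻ y, G y ^ pp)^(1/pp) := by
  set Ap := (∫⁻ y, G y ^ pp)^(1/pp) with hAp
  set e := ENNReal.ofReal R with he
  have he0 : e ≠ 0 := by simp [he, hR]
  have heT : e ≠ ∞ := ENNReal.ofReal_ne_top
  have hrr0 : (0:ℝ) < rr := by linarith
  have hstep : ∫⁻ y in (ball x R)ᶜ, (ENNReal.ofReal ‖x - y‖)⁻¹ * G y
      = ∑' k : ℕ, ∫⁻ y in Bnn x R k, (ENNReal.ofReal ‖x - y‖)⁻¹ * G y := by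
    rw [← lintegral_iUnion (Bnn_measurable x R) (Bnn_disjoint x R hR), Bnn_union x R hR]
  rw [hstep]
  have hterm : ∀ k : ℕ, ∫⁻ y in Bnn x R k, (ENNReal.ofReal ‖x - y‖)⁻¹ * G y
      ≤ (qgeo rr)^k * ((2:ℝ≥0∞)^(2/rr) * c₀^(1/rr) * e^(2/rr-1) * Ap) := by
    intro k
    set b : ℝ≥0∞ := (2:ℝ≥0∞)^k * e with hb
    have hb0 : b ≠ 0 := by
      simp only [hb, ne_eq, mul_eq_zero, not_or]
      exact ⟨by positivity, he0⟩
    have hbT : b ≠ ∞ := ENNReal.mul_ne_top (by simp) heT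
    have hofb : ENNReal.ofReal (2^k * R) = b := by
      rw [hb, he, ENNReal.ofReal_mul (by positivity), ENNReal.ofReal_pow (by norm_num)]
      norm_num
    have hk1 : (0:ℝ) < 2^k * R := by positivity
    calc ∫⁻ y in Bnn x R k, (ENNReal.ofReal ‖x - y‖)⁻¹ * G y
        ≤ ∫⁻ y in Bnn x R k, b⁻¹ * G y := by
          apply setLIntegral_mono (measurable_const.mul hG)
          intro y hy
          apply mul_le_mul_left
          rw [← hofb]
          exact ENNReal.inv_le_inv' (ENNReal.ofReal_le_ofReal hy.1)
      _ = b⁻¹ * ∫⁻ y in Bnn x R k, G y := lintegral_const_mul _ hG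
      _ ≤ b⁻¹ * ((volume (Bnn x R k))^(1/rr) * Ap) :=
          mul_le_mul_right (holder_set volume G hG hpr _) _
      _ ≤ b⁻¹ * ((volume (ball x (2^(k+1) * R)))^(1/rr) * Ap) := by
          apply mul_le_mul_right
          apply mul_le_mul_left
          apply ENNReal.rpow_le_rpow _ (by positivity)
          apply measure_mono
          intro y hy
          rw [mem_ball, dist_comm, dist_eq_norm]
          exact hy.2
      _ = b⁻¹ * ((ENNReal.ofReal ((2^(k+1) * R)^2) * c₀)^(1/rr) * Ap) := by
          rw [meas_ball x (by positivity : (0:ℝ) ≤ 2^(k+1) * R)]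
      _ ≤ (qgeo rr)^k * ((2:ℝ≥0∞)^(2/rr) * c₀^(1/rr) * e^(2/rr-1) * Ap) := by
          apply le_of_eq
          have h2k1 : ENNReal.ofReal ((2^(k+1) * R)^2) = (2 * b)^(2:ℕ) := by
            rw [ENNReal.ofReal_pow (by positivity)]
            congr 1
            rw [hb, he, ENNReal.ofReal_mul (by positivity), ENNReal.ofReal_pow (by norm_num)]
            rw [pow_succ]
            norm_num
            ring
          rw [h2k1]
          rw [ENNReal.mul_rpow_of_nonneg _ _ (by positivity : (0:ℝ) ≤ 1/rr)]
          rw [← ENNReal.rpow_natCast (2*b) 2, ← ENNReal.rpow_mul]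
          have h2 : (2:ℝ) * (1/rr) = 2/rr := by ring
          rw [show ((2:ℕ):ℝ) = (2:ℝ) by norm_num, h2]
          rw [ENNReal.mul_rpow_of_nonneg _ _ (by positivity : (0:ℝ) ≤ 2/rr)]
          -- now: b⁻¹ * (2^(2/rr) * b^(2/rr) * c₀^(1/rr) * Ap)
          have h3 : b⁻¹ * b^(2/rr) = b^(2/rr - 1) := by
            rw [← ENNReal.rpow_neg_one b, ← ENNReal.rpow_add _ _ hb0 hbT]
            congr 1
            ring
          have h4 : b^(2/rr-1) = (qgeo rr)^k * e^(2/rr-1) := by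
            rw [hb, ENNReal.mul_rpow_of_ne_top (by simp) heT]
            congr 1
            rw [← ENNReal.rpow_natCast (2:ℝ≥0∞) k, ← ENNReal.rpow_mul, mul_comm ((k:ℝ)),
              ENNReal.rpow_mul, ENNReal.rpow_natCast]
            rfl
          calc b⁻¹ * ((2:ℝ≥0∞)^(2/rr) * b^(2/rr) * c₀^(1/rr) * Ap)
              = (b⁻¹ * b^(2/rr)) * ((2:ℝ≥0∞)^(2/rr) * c₀^(1/rr) * Ap) := by ring
            _ = ((qgeo rr)^k * e^(2/rr-1)) * ((2:ℝ≥0∞)^(2/rr) * c₀^(1/rr) * Ap) := by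
                rw [h3, h4]
            _ = (qgeo rr)^k * ((2:ℝ≥0∞)^(2/rr) * c₀^(1/rr) * e^(2/rr-1) * Ap) := by ring
  calc ∑' k : ℕ, ∫⁻ y in Bnn x R k, (ENNReal.ofReal ‖x - y‖)⁻¹ * G y
      ≤ ∑' k : ℕ, (qgeo rr)^k * ((2:ℝ≥0∞)^(2/rr) * c₀^(1/rr) * e^(2/rr-1) * Ap) :=
        ENNReal.tsum_le_tsum hterm
    _ = (1 - qgeo rr)⁻¹ * ((2:ℝ≥0∞)^(2/rr) * c₀^(1/rr) * e^(2/rr-1) * Ap) := by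
        rw [ENNReal.tsum_mul_right, ENNReal.tsum_geometric]
    _ = Cfar rr * e^(2/rr-1) * Ap := by
        rw [Cfar]
        ring


lemma rpow_ne_zero_ne_top {a : ℝ≥0∞} (h0 : a ≠ 0) (hT : a ≠ ∞) (s : ℝ) :
    a^s ≠ 0 ∧ a^s ≠ ∞ := by
  constructor
  · simp [ENNReal.rpow_eq_zero_iff, h0, hT]
  · simp [ENNReal.rpow_eq_top_iff, h0, hT]

lemma hedberg (G : E2 → ℝ≥0∞) (hG : Measurable G) {pp r : ℝ}
    (hpr : pp.HolderConjugate r) (hrr : 2 < r)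
    (hA0 : (∫⁻ y, G y ^ pp)^(1/pp) ≠ 0) (hAT : (∫⁻ y, G y ^ pp)^(1/pp) ≠ ∞) (x : E2) :
    ∫⁻ y, (ENNReal.ofReal ‖x - y‖)⁻¹ * G y
      ≤ (16 * c₀ + Cfar r) * (maxFn G x)^((1-2/r)/(2-2/r))
          * ((∫⁻ y, G y ^ pp)^(1/pp))^(1 - (1-2/r)/(2-2/r)) := by
  set Ap := (∫⁻ y, G y ^ pp)^(1/pp) with hApdef
  set M := maxFn G x with hMdef
  set θ : ℝ := (1-2/r)/(2-2/r) with hθ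
  have hr0 : (0:ℝ) < r := by linarith
  have h2r : 2/r < 1 := (div_lt_one hr0).mpr hrr
  have hden : (0:ℝ) < 2-2/r := by linarith
  have hθpos : 0 < θ := by
    apply div_pos <;> linarith
  have hne1 : r ≠ 0 := by positivity
  have hne2 : 2*r-2 ≠ 0 := by nlinarith
  have hsplit : ∀ R : ℝ, 0 < R →
      (∫⁻ y, (ENNReal.ofReal ‖x - y‖)⁻¹ * G y)
        ≤ 16 * c₀ * ENNReal.ofReal R * M + Cfar r * (ENNReal.ofReal R)^(2/r - 1) * Ap := by
    intro R hR
    rw [← lintegral_add_compl (fun y => (ENNReal.ofReal ‖x - y‖)⁻¹ * G y)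
      (measurableSet_ball : MeasurableSet (ball x R))]
    exact add_le_add (near_bound G hG x hR) (far_bound G hG x hR hpr hrr)
  rcases eq_or_ne M 0 with hM0 | hM0
  · -- maximal function vanishes: T x = 0
    have hbound : ∀ n : ℕ, (∫⁻ y, (ENNReal.ofReal ‖x - y‖)⁻¹ * G y)
        ≤ (Cfar r * Ap) * (qgeo r)^n := by
      intro n
      have h1 := hsplit (2^n) (by positivity)
      rw [hM0, mul_zero, zero_add] at h1
      have h2 : ENNReal.ofReal ((2:ℝ)^n) = (2:ℝ≥0∞)^n := by
        rw [ENNReal.ofReal_pow (by norm_num)]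
        norm_num
      have h3 : ((2:ℝ≥0∞)^n)^(2/r-1) = (qgeo r)^n := by
        rw [← ENNReal.rpow_natCast (2:ℝ≥0∞) n, ← ENNReal.rpow_mul, mul_comm ((n:ℝ)),
          ENNReal.rpow_mul, ENNReal.rpow_natCast]
        rfl
      rw [h2, h3] at h1
      calc (∫⁻ y, (ENNReal.ofReal ‖x - y‖)⁻¹ * G y) ≤ Cfar r * (qgeo r)^n * Ap := h1
        _ = (Cfar r * Ap) * (qgeo r)^n := by ring
    have htend : Tendsto (fun n : ℕ => (Cfar r * Ap) * (qgeo r)^n) atTop (𝓝 0) := by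
      have h0 := ENNReal.tendsto_pow_atTop_nhds_zero_of_lt_one (qgeo_lt_one hrr)
      have := ENNReal.Tendsto.const_mul (a := Cfar r * Ap) h0
        (Or.inr (ENNReal.mul_ne_top (Cfar_ne_top hrr) hAT))
      simpa using this
    have hT0 : (∫⁻ y, (ENNReal.ofReal ‖x - y‖)⁻¹ * G y) = 0 :=
      le_zero_iff.mp (ge_of_tendsto' htend hbound)
    rw [hT0]
    exact zero_le
  rcases eq_or_ne M ∞ with hMT | hMT
  · have hRHS : (16 * c₀ + Cfar r) * M^θ * Ap^(1-θ) = ∞ := by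
      rw [hMT, ENNReal.top_rpow_of_pos hθpos]
      rw [ENNReal.mul_top, ENNReal.top_mul]
      · exact (rpow_ne_zero_ne_top hA0 hAT _).1
      · simp only [ne_eq, add_eq_zero, not_and]
        intro h16
        exact absurd h16 (by
          simp only [mul_eq_zero, not_or]
          exact ⟨by norm_num, c0_pos.ne'⟩)
    rw [hRHS]
    exact le_top
  · -- main case : 0 < M < ∞
    set ε : ℝ≥0∞ := Ap^(1/(2-2/r)) * M^(-(1/(2-2/r))) with hε
    obtain ⟨hap0, hapT⟩ := rpow_ne_zero_ne_top hA0 hAT (1/(2-2/r))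
    obtain ⟨hmp0, hmpT⟩ := rpow_ne_zero_ne_top hM0 hMT (-(1/(2-2/r)))
    have hε0 : ε ≠ 0 := mul_ne_zero hap0 hmp0
    have hεT : ε ≠ ∞ := ENNReal.mul_ne_top hapT hmpT
    have hRpos : 0 < ε.toReal := ENNReal.toReal_pos hε0 hεT
    have h1 := hsplit ε.toReal hRpos
    rw [ENNReal.ofReal_toReal hεT] at h1
    refine le_trans h1 (le_of_eq ?_)
    have hexp1 : -(1/(2-2/r)) + 1 = θ := by
      rw [hθ]
      have hr1 : r - 1 ≠ 0 := by linarith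
      field_simp
      ring
    have hexp2 : (1:ℝ)-θ = 1/(2-2/r) := by
      rw [hθ]
      have hr1 : r - 1 ≠ 0 := by linarith
      field_simp
      ring
    have eM : M^(-(1/(2-2/r))) * M = M^θ := by
      nth_rewrite 2 [← ENNReal.rpow_one M]
      rw [← ENNReal.rpow_add _ _ hM0 hMT, hexp1]
    have e1 : ε * M = M^θ * Ap^(1-θ) := by
      calc ε * M = Ap^(1/(2-2/r)) * (M^(-(1/(2-2/r))) * M) := by rw [hε]; ring
        _ = Ap^(1/(2-2/r)) * M^θ := by rw [eM]
        _ = M^θ * Ap^(1-θ) := by rw [hexp2]; ring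
    have e2 : ε^(2/r-1) * Ap = M^θ * Ap^(1-θ) := by
      have hm1 : ε^(2/r-1) = (Ap^(1/(2-2/r)))^(2/r-1) * (M^(-(1/(2-2/r))))^(2/r-1) := by
        rw [hε, ENNReal.mul_rpow_of_ne_top hapT hmpT]
      have hm2 : (Ap^(1/(2-2/r)))^(2/r-1) = Ap^((1/(2-2/r))*(2/r-1)) :=
        (ENNReal.rpow_mul Ap _ _).symm
      have hm3 : (M^(-(1/(2-2/r))))^(2/r-1) = M^θ := by
        rw [← ENNReal.rpow_mul]
        congr 1
        rw [hθ]
        field_simp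
        ring
      have hm4 : Ap^((1/(2-2/r))*(2/r-1)) * Ap = Ap^(1-θ) := by
        nth_rewrite 2 [← ENNReal.rpow_one Ap]
        rw [← ENNReal.rpow_add _ _ hA0 hAT]
        congr 1
        rw [hθ]
        field_simp
        ring
      calc ε^(2/r-1) * Ap = Ap^((1/(2-2/r))*(2/r-1)) * M^θ * Ap := by rw [hm1, hm2, hm3]
        _ = (Ap^((1/(2-2/r))*(2/r-1)) * Ap) * M^θ := by ring
        _ = M^θ * Ap^(1-θ) := by rw [hm4]; ring
    calc 16 * c₀ * ε * M + Cfar r * ε^(2/r-1) * Ap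
        = 16 * c₀ * (ε * M) + Cfar r * (ε^(2/r-1) * Ap) := by ring
      _ = 16 * c₀ * (M^θ * Ap^(1-θ)) + Cfar r * (M^θ * Ap^(1-θ)) := by rw [e1, e2]
      _ = (16 * c₀ + Cfar r) * M^θ * Ap^(1-θ) := by ring


end HLSaux

open HLSaux

/-- Hardy–Littlewood–Sobolev in dimension 2 with kernel `|x|⁻¹`: for `r ∈ (2,∞)`
there is `C` with `‖|·|⁻¹ ∗ g‖_{L^{2r/(r−2)}} ≤ C ‖g‖_{L^{r/(r−1)}}` for all
nonnegative measurable `g`, and in particular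
`‖|·|⁻¹ ∗ |u|²‖_{L^{2r/(r−2)}} ≤ C ‖u‖_{L^{2r/(r−1)}}²` for measurable `u`. -/
theorem stmt8 (r : ℝ) (hr : 2 < r) :
    ∃ C : ℝ≥0,
      (∀ g : E2 → ℝ, Measurable g → (∀ x, 0 ≤ g x) →
        (∫⁻ x, (∫⁻ y, (ENNReal.ofReal ‖x - y‖)⁻¹ * ENNReal.ofReal (g y))
            ^ (2 * r / (r - 2))) ^ ((r - 2) / (2 * r))
        ≤ C * (∫⁻ y, ENNReal.ofReal (g y) ^ (r / (r - 1))) ^ ((r - 1) / r)) ∧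
      (∀ u : E2 → ℂ, Measurable u →
        (∫⁻ x, (∫⁻ y, (ENNReal.ofReal ‖x - y‖)⁻¹ * (‖u y‖₊ : ℝ≥0∞) ^ 2)
            ^ (2 * r / (r - 2))) ^ ((r - 2) / (2 * r))
        ≤ C * (eLpNorm u (ENNReal.ofReal (2 * r / (r - 1))) volume) ^ 2) := by
  have hr1 : (1:ℝ) < r := by linarith
  have hrne : r ≠ 0 := by positivity
  have hrm1 : (0:ℝ) < r - 1 := by linarith
  have hrm2 : (0:ℝ) < r - 2 := by linarith
  set pp : ℝ := r/(r-1) with hpp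
  set qq : ℝ := 2*r/(r-2) with hqq
  set θ : ℝ := (1-2/r)/(2-2/r) with hθ
  have hpr : pp.HolderConjugate r :=
    ((Real.holderConjugate_iff_eq_conjExponent hr1).mpr rfl).symm
  have hpp1 : 1 < pp := hpr.lt
  have hpp0 : (0:ℝ) < pp := by linarith
  have hqq0 : (0:ℝ) < qq := by positivity
  have hqqne : qq ≠ 0 := ne_of_gt hqq0
  have h2r : 2/r < 1 := (div_lt_one (by linarith)).mpr hr
  have hden : (0:ℝ) < 2-2/r := by linarith
  have h2rm2 : 2*r-2 ≠ 0 := by nlinarith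
  -- exponent identities
  have hθqq : θ * qq = pp := by
    rw [hθ, hqq, hpp]
    field_simp
  have hθqq' : (1-θ) * qq = qq - pp := by
    rw [hθ, hqq, hpp]
    field_simp
  have hinvq : (r-2)/(2*r) = 1/qq := by
    rw [hqq, one_div_div]
  have hinvp : (r-1)/r = 1/pp := by
    rw [hpp, one_div_div]
  -- constants
  set CH : ℝ≥0∞ := 16 * c₀ + Cfar r with hCH
  have hCHT : CH ≠ ∞ := by
    rw [hCH]
    exact ENNReal.add_ne_top.mpr ⟨ENNReal.mul_ne_top (by norm_num) c0_ne_top, Cfar_ne_top hr⟩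
  set K : ℝ≥0∞ := CH * (CM pp)^(1/qq) with hK
  have hKT : K ≠ ∞ :=
    ENNReal.mul_ne_top hCHT (ENNReal.rpow_ne_top_of_nonneg (by positivity) (CM_ne_top pp))
  set C : ℝ≥0 := K.toNNReal + 1 with hC
  have hKC : K ≤ (C:ℝ≥0∞) := by
    rw [hC]
    push_cast
    calc K = (K.toNNReal : ℝ≥0∞) := (ENNReal.coe_toNNReal hKT).symm
      _ ≤ (K.toNNReal : ℝ≥0∞) + 1 := le_self_add
  have hC0 : (C:ℝ≥0∞) ≠ 0 := by
    simp [hC]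
  have main : ∀ g : E2 → ℝ, Measurable g → (∀ x, 0 ≤ g x) →
      (∫⁻ x, (∫⁻ y, (ENNReal.ofReal ‖x - y‖)⁻¹ * ENNReal.ofReal (g y))
          ^ (2 * r / (r - 2))) ^ ((r - 2) / (2 * r))
      ≤ C * (∫⁻ y, ENNReal.ofReal (g y) ^ (r / (r - 1))) ^ ((r - 1) / r) := by
    intro g hg hg0
    set G : E2 → ℝ≥0∞ := fun y => ENNReal.ofReal (g y) with hGdef
    have hG : Measurable G := ENNReal.measurable_ofReal.comp hg
    set Ip : ℝ≥0∞ := ∫⁻ y, G y ^ pp with hIp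
    rw [hinvq, hinvp]
    rcases eq_or_ne Ip 0 with h0 | h0
    · -- G vanishes a.e.
      have hGz : G =ᵐ[volume] 0 := by
        have h1 : (fun y => G y ^ pp) =ᵐ[volume] 0 :=
          (lintegral_eq_zero_iff (hG.pow_const pp)).mp h0
        filter_upwards [h1] with y hy
        simp only [Pi.zero_apply] at hy ⊢
        rcases ENNReal.rpow_eq_zero_iff.mp hy with ⟨h, _⟩ | ⟨h, _⟩
        · exact h
        · exact absurd h ENNReal.ofReal_ne_top
      have hT0 : ∀ x : E2, (∫⁻ y, (ENNReal.ofReal ‖x - y‖)⁻¹ * G y) = 0 := by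
        intro x
        rw [← lintegral_zero]
        apply lintegral_congr_ae
        filter_upwards [hGz] with y hy
        rw [hy]
        simp
      have hLHS : (∫⁻ x, (∫⁻ y, (ENNReal.ofReal ‖x - y‖)⁻¹ * G y) ^ qq) ^ (1/qq) = 0 := by
        simp_rw [hT0]
        rw [ENNReal.zero_rpow_of_pos hqq0, lintegral_zero, ENNReal.zero_rpow_of_pos (by positivity)]
      rw [hLHS]
      exact zero_le
    rcases eq_or_ne Ip ∞ with hT | hT
    · rw [hT, ENNReal.top_rpow_of_pos (by positivity), ENNReal.mul_top hC0]
      exact le_top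
    · obtain ⟨hA0, hAT⟩ := rpow_ne_zero_ne_top h0 hT (1/pp)
      set Ap : ℝ≥0∞ := Ip ^ (1/pp) with hApdef
      have hpoint := hedberg G hG hpr hr hA0 hAT
      have hCHqT : CH^qq ≠ ∞ := ENNReal.rpow_ne_top_of_nonneg (le_of_lt hqq0) hCHT
      obtain ⟨hApq0, hApqT⟩ := rpow_ne_zero_ne_top hA0 hAT (qq - pp)
      have hIqq : ∫⁻ x, (∫⁻ y, (ENNReal.ofReal ‖x - y‖)⁻¹ * G y) ^ qq
          ≤ CH^qq * Ap^(qq-pp) * (CM pp * Ip) := by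
        calc ∫⁻ x, (∫⁻ y, (ENNReal.ofReal ‖x - y‖)⁻¹ * G y) ^ qq
            ≤ ∫⁻ x, (CH * (maxFn G x)^θ * Ap^(1-θ)) ^ qq :=
              lintegral_mono fun x => ENNReal.rpow_le_rpow (hpoint x) (le_of_lt hqq0)
          _ = ∫⁻ x, (CH^qq * Ap^(qq-pp)) * (maxFn G x)^pp := by
              apply lintegral_congr
              intro x
              rw [ENNReal.mul_rpow_of_nonneg _ _ (le_of_lt hqq0),
                ENNReal.mul_rpow_of_nonneg _ _ (le_of_lt hqq0),
                ← ENNReal.rpow_mul (maxFn G x), ← ENNReal.rpow_mul Ap, hθqq, hθqq']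
              ring
          _ = (CH^qq * Ap^(qq-pp)) * ∫⁻ x, (maxFn G x)^pp :=
              lintegral_const_mul' _ _ (ENNReal.mul_ne_top hCHqT hApqT)
          _ ≤ (CH^qq * Ap^(qq-pp)) * (CM pp * Ip) := by
              apply mul_le_mul_right
              exact maxFn_strong G hG (fun y => ENNReal.ofReal_ne_top) hpp1
      have hApIp : Ap ^ pp = Ip := by
        rw [hApdef, ← ENNReal.rpow_mul]
        rw [show 1/pp*pp = 1 by field_simp]
        exact ENNReal.rpow_one Ip
      calc (∫⁻ x, (∫⁻ y, (ENNReal.ofReal ‖x - y‖)⁻¹ * G y) ^ qq) ^ (1/qq)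
          ≤ (CH^qq * Ap^(qq-pp) * (CM pp * Ip)) ^ (1/qq) :=
            ENNReal.rpow_le_rpow hIqq (by positivity)
        _ = (CH^qq * CM pp * Ap^qq) ^ (1/qq) := by
            congr 1
            have hAA : Ap^(qq-pp) * Ap^pp = Ap^qq := by
              rw [← ENNReal.rpow_add _ _ hA0 hAT, show qq-pp+pp = qq by ring]
            calc CH^qq * Ap^(qq-pp) * (CM pp * Ip)
                = CH^qq * CM pp * (Ap^(qq-pp) * Ap^pp) := by rw [hApIp]; ring
              _ = CH^qq * CM pp * Ap^qq := by rw [hAA]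
        _ = CH * (CM pp)^(1/qq) * Ap := by
            rw [ENNReal.mul_rpow_of_nonneg _ _ (by positivity : (0:ℝ) ≤ 1/qq),
              ENNReal.mul_rpow_of_nonneg _ _ (by positivity : (0:ℝ) ≤ 1/qq),
              ← ENNReal.rpow_mul CH, ← ENNReal.rpow_mul Ap]
            rw [show qq * (1/qq) = 1 by field_simp]
            rw [ENNReal.rpow_one, ENNReal.rpow_one]
        _ ≤ (C:ℝ≥0∞) * Ap := mul_le_mul_left hKC _
  refine ⟨C, main, ?_⟩
  intro u hu
  have hgm : Measurable (fun y : E2 => ‖u y‖^2) := (hu.norm).pow_const 2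
  have h := main (fun y => ‖u y‖^2) hgm (fun x => sq_nonneg _)
  have heq1 : ∀ y : E2, ENNReal.ofReal (‖u y‖^2) = (‖u y‖₊ : ℝ≥0∞) ^ 2 := by
    intro y
    rw [ENNReal.ofReal_pow (norm_nonneg _), ofReal_norm, enorm_eq_nnnorm]
  simp_rw [heq1] at h
  refine le_trans h ?_
  apply mul_le_mul_right
  -- (∫⁻ ((‖u‖₊)^2)^pp)^((r-1)/r) = eLpNorm u (ofReal (2r/(r-1)))^2
  apply le_of_eq
  set s2 : ℝ := 2*r/(r-1) with hs2
  have hs2pos : 0 < s2 := by positivity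
  have hP0 : ENNReal.ofReal s2 ≠ 0 := by
    simp only [ne_eq, ENNReal.ofReal_eq_zero, not_le]
    exact hs2pos
  have hPT : ENNReal.ofReal s2 ≠ ∞ := ENNReal.ofReal_ne_top
  rw [eLpNorm_eq_lintegral_rpow_enorm_toReal hP0 hPT, ENNReal.toReal_ofReal (le_of_lt hs2pos)]
  simp only [enorm_eq_nnnorm]
  have hintegrand : ∀ y : E2, ((‖u y‖₊ : ℝ≥0∞) ^ (2:ℕ)) ^ pp = (‖u y‖₊ : ℝ≥0∞) ^ s2 := by
    intro y
    rw [← ENNReal.rpow_natCast (‖u y‖₊ : ℝ≥0∞) 2, ← ENNReal.rpow_mul]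
    congr 1
    rw [hs2, hpp]
    push_cast
    ring
  simp_rw [← hpp, hintegrand]
  rw [← ENNReal.rpow_natCast ((∫⁻ y, (‖u y‖₊ : ℝ≥0∞) ^ s2) ^ (1/s2)) 2, ← ENNReal.rpow_mul]
  congr 1
  rw [hs2]
  push_cast
  field_simp

end
end

section
/- For every measurable u : ℝ² → ℂ, ∬_{{(x,y) : |x−y| < 1}} |log|x−y|| · |u(x)|² |u(y)|² dx dy ≤ ‖log|·|‖_{L²(\{|x| ≤ 1\})} · ‖u‖_{L⁴(ℝ²)}² · ‖u‖_{L²(ℝ²)}², where both sides may be +∞ and ‖log|·|‖_{L²(\{|x|≤1\})} = (∫_{|x|≤1} (log|x|)² dx)^{1/2}. -/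
open MeasureTheory ENNReal NNReal
open Set Metric

noncomputable section

lemma key_real : ∀ r : ℝ, 0 < r → r ≤ 1 → r * (Real.log r) ^ 2 ≤ 4 := by
  intro r hr hr1
  set s := Real.sqrt r with hs
  have hs0 : 0 < s := Real.sqrt_pos.2 hr
  have hlog : Real.log r = 2 * Real.log s := by
    rw [hs, Real.log_sqrt hr.le]; ring
  have hsq : s ^ 2 = r := Real.sq_sqrt hr.le
  have hs1 : s ≤ 1 := by
    nlinarith [hsq]
  have hls : |Real.log s| ≤ 1 / s := by
    have h1 : Real.log s ≤ 0 := Real.log_nonpos hs0.le hs1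
    have h2 : Real.log s⁻¹ ≤ s⁻¹ - 1 := Real.log_le_sub_one_of_pos (by positivity)
    rw [Real.log_inv] at h2
    rw [abs_of_nonpos h1]
    have : (0:ℝ) < s⁻¹ := by positivity
    rw [one_div]; linarith
  have h3 : (Real.log s) ^ 2 ≤ (1 / s) ^ 2 := by
    have := sq_abs (Real.log s)
    nlinarith [abs_nonneg (Real.log s)]
  have h4 : (1 / s) ^ 2 = 1 / r := by
    rw [div_pow, one_pow, hsq]
  rw [hlog]
  have : r * (2 * Real.log s) ^ 2 = 4 * (r * (Real.log s) ^ 2) := by ring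
  rw [this]
  have : r * (Real.log s) ^ 2 ≤ r * (1 / r) := by
    rw [← h4]; nlinarith [h3, hr.le]
  rw [mul_one_div_cancel hr.ne'] at this
  linarith

lemma polar_lintegral (g : ℝ → ℝ≥0∞) (hg : Measurable g) :
    ∫⁻ x : E2, g ‖x‖ = (volume : Measure E2).toSphere Set.univ *
      ∫⁻ r in Set.Ioi (0:ℝ), ENNReal.ofReal r * g r := by
  have hdim : Module.finrank ℝ E2 = 2 := by
    simpa using finrank_euclideanSpace_fin (𝕜 := ℝ) (n := 2)
  have h0 : (∫⁻ x : E2, g ‖x‖) = ∫⁻ x in ({0}ᶜ : Set E2), g ‖x‖ := by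
    rw [restrict_compl_singleton]
  rw [h0, ← lintegral_subtype_comap (measurableSet_singleton (0:E2)).compl]
  have hmp := (Measure.measurePreserving_homeomorphUnitSphereProd
    (volume : Measure E2)).lintegral_comp
    (f := fun p : sphere (0:E2) 1 × Ioi (0:ℝ) => g p.2)
    (hg.comp (measurable_subtype_coe.comp measurable_snd))
  simp only [homeomorphUnitSphereProd_apply_snd_coe] at hmp
  rw [hmp, hdim]
  rw [lintegral_prod (fun b : sphere (0:E2) 1 × Ioi (0:ℝ) => g b.2)
    ((hg.comp (measurable_subtype_coe.comp measurable_snd)).aemeasurable)]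
  simp only [Prod.snd]
  rw [lintegral_const, mul_comm]
  congr 1
  norm_num
  rw [Measure.volumeIoiPow,
    lintegral_withDensity_eq_lintegral_mul _
      ((measurable_subtype_coe.pow_const 1).ennreal_ofReal)
      (show Measurable fun y : Ioi (0:ℝ) => g ↑y from hg.comp measurable_subtype_coe)]
  rw [show ((fun r : Ioi (0:ℝ) => ENNReal.ofReal (r.1 ^ 1)) * fun y : Ioi (0:ℝ) => g ↑y)
      = fun r : Ioi (0:ℝ) => (fun x : ℝ => ENNReal.ofReal (x ^ 1) * g x) r.1 from rfl]
  rw [lintegral_subtype_comap measurableSet_Ioi (fun x : ℝ => ENNReal.ofReal (x ^ 1) * g x)]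
  simp [pow_one]

lemma log_sq_integrable :
    IntegrableOn (fun x : E2 => (Real.log ‖x‖) ^ 2) {x : E2 | ‖x‖ ≤ 1} volume := by
  have hmeas : Measurable (fun x : E2 => (Real.log ‖x‖) ^ 2) :=
    (Real.measurable_log.comp measurable_norm).pow_const 2
  have hball : MeasurableSet {x : E2 | ‖x‖ ≤ 1} :=
    (isClosed_le continuous_norm continuous_const).measurableSet
  set g : ℝ → ℝ≥0∞ := (Set.Iic (1:ℝ)).indicator (fun r => ENNReal.ofReal ((Real.log r) ^ 2))
    with hgdef
  have hgmeas : Measurable g :=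
    Measurable.indicator ((Real.measurable_log.pow_const 2).ennreal_ofReal) measurableSet_Iic
  have hfin : ∫⁻ x : E2 in {x : E2 | ‖x‖ ≤ 1}, ENNReal.ofReal ((Real.log ‖x‖) ^ 2) < ∞ := by
    have h1 : ∫⁻ x : E2 in {x : E2 | ‖x‖ ≤ 1}, ENNReal.ofReal ((Real.log ‖x‖) ^ 2)
        = ∫⁻ x : E2, g ‖x‖ := by
      rw [← lintegral_indicator hball]
      refine lintegral_congr fun x => ?_
      by_cases h : ‖x‖ ≤ 1 <;>
        simp [hgdef, Set.indicator_apply, h, Set.mem_setOf_eq]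
    rw [h1, polar_lintegral g hgmeas]
    refine ENNReal.mul_lt_top (measure_lt_top _ _) ?_
    have h2 : ∫⁻ r in Ioi (0:ℝ), ENNReal.ofReal r * g r
        ≤ ∫⁻ r in Ioi (0:ℝ), (Set.Iic (1:ℝ)).indicator (fun _ => (4:ℝ≥0∞)) r := by
      refine setLIntegral_mono (measurable_const.indicator measurableSet_Iic) fun r hr => ?_
      by_cases h : r ≤ 1
      · simp only [hgdef, Set.indicator_of_mem, Set.mem_Iic.2 h]
        rw [← ENNReal.ofReal_mul (le_of_lt hr)]
        exact (ENNReal.ofReal_le_ofReal (by simpa using key_real r hr h)).trans_eq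
          (by norm_num)
      · simp [hgdef, Set.indicator_of_notMem, h, Set.mem_Iic]
    refine lt_of_le_of_lt h2 ?_
    rw [lintegral_indicator measurableSet_Iic, Measure.restrict_restrict measurableSet_Iic,
      setLIntegral_const]
    refine ENNReal.mul_lt_top (by norm_num) ?_
    rw [Set.inter_comm, Set.Ioi_inter_Iic]
    simp [Real.volume_Ioc]
  refine ⟨hmeas.aestronglyMeasurable, ?_⟩
  rw [hasFiniteIntegral_iff_ofReal (Filter.Eventually.of_forall fun x => sq_nonneg _)]
  exact hfin


/-- For every measurable `u : ℝ² → ℂ`,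
`∬_{|x−y|<1} |log|x−y|| |u(x)|²|u(y)|² dx dy
  ≤ ‖log|·|‖_{L²(|x|≤1)} ‖u‖_{L⁴}² ‖u‖_{L²}²`, both sides possibly `+∞`. -/
theorem stmt9 (u : E2 → ℂ) (hu : Measurable u) :
    ∫⁻ z in {z : E2 × E2 | ‖z.1 - z.2‖ < 1},
        ENNReal.ofReal |Real.log ‖z.1 - z.2‖| * (‖u z.1‖₊ : ℝ≥0∞) ^ 2 *
          (‖u z.2‖₊ : ℝ≥0∞) ^ 2
      ≤ ENNReal.ofReal ((∫ x in {x : E2 | ‖x‖ ≤ 1}, (Real.log ‖x‖) ^ 2) ^ (1 / 2 : ℝ)) *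
          (eLpNorm u 4 volume) ^ 2 * (eLpNorm u 2 volume) ^ 2 := by
  set f : E2 → ℝ≥0∞ := fun x => (‖u x‖₊ : ℝ≥0∞) ^ 2 with hfdef
  have hf : Measurable f := (hu.nnnorm.coe_nnreal_ennreal).pow_const 2
  set g : E2 → ℝ≥0∞ :=
    ({w : E2 | ‖w‖ < 1}).indicator (fun w => ENNReal.ofReal |Real.log ‖w‖|) with hgdef
  have hlt : MeasurableSet {w : E2 | ‖w‖ < 1} :=
    measurableSet_lt measurable_norm measurable_const
  have hgm : Measurable g :=
    ((Real.measurable_log.comp measurable_norm).abs.ennreal_ofReal).indicator hlt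
  have hS : MeasurableSet {z : E2 × E2 | ‖z.1 - z.2‖ < 1} :=
    measurableSet_lt (measurable_fst.sub measurable_snd).norm measurable_const
  -- Step A: rewrite as a full-space integral
  have stepA : ∫⁻ z in {z : E2 × E2 | ‖z.1 - z.2‖ < 1},
        ENNReal.ofReal |Real.log ‖z.1 - z.2‖| * (‖u z.1‖₊ : ℝ≥0∞) ^ 2 *
          (‖u z.2‖₊ : ℝ≥0∞) ^ 2
      = ∫⁻ z : E2 × E2, g (z.1 - z.2) * f z.1 * f z.2 := by
    rw [← lintegral_indicator hS]
    refine lintegral_congr fun z => ?_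
    by_cases h : ‖z.1 - z.2‖ < 1 <;>
      simp [hgdef, hfdef, Set.indicator_apply, Set.mem_setOf_eq, h]
  -- conjugate exponents
  have hconj : Real.HolderConjugate 2 2 := by
    constructor <;> norm_num
  have h22 : ∀ a : ℝ≥0∞, a ^ (2:ℝ) = a ^ (2:ℕ) := fun a => by
    rw [← ENNReal.rpow_natCast]; norm_num
  set A : ℝ≥0∞ := (∫⁻ w, g w ^ 2) ^ (1/2:ℝ) with hAdef
  set B : ℝ≥0∞ := (∫⁻ x, f x ^ 2) ^ (1/2:ℝ) with hBdef
  -- Hölder + translation invariance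
  have key : ∀ y : E2, ∫⁻ x, g (x - y) * f x ≤ A * B := by
    intro y
    have hgy : Measurable fun x : E2 => g (x - y) :=
      hgm.comp (measurable_id.sub measurable_const)
    calc ∫⁻ x, g (x - y) * f x
        = ∫⁻ x, ((fun x : E2 => g (x - y)) * f) x := by simp [Pi.mul_apply]
      _ ≤ (∫⁻ x, g (x - y) ^ (2:ℝ)) ^ (1/2:ℝ) * (∫⁻ x, f x ^ (2:ℝ)) ^ (1/2:ℝ) :=
          ENNReal.lintegral_mul_le_Lp_mul_Lq volume hconj hgy.aemeasurable hf.aemeasurable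
      _ = A * B := by
          simp_rw [h22]
          rw [hAdef, hBdef, lintegral_sub_right_eq_self (fun w => g w ^ (2:ℕ)) y]
  -- Tonelli and assembly
  have hFm : Measurable (fun z : E2 × E2 => g (z.1 - z.2) * f z.1 * f z.2) :=
    ((hgm.comp (measurable_fst.sub measurable_snd)).mul (hf.comp measurable_fst)).mul
      (hf.comp measurable_snd)
  rw [stepA, Measure.volume_eq_prod,
    lintegral_prod_symm (fun z : E2 × E2 => g (z.1 - z.2) * f z.1 * f z.2) hFm.aemeasurable]
  have step2 : ∫⁻ y, ∫⁻ x, g (x - y) * f x * f y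
      ≤ A * B * ∫⁻ x, f x := by
    have e1 : ∀ y : E2, ∫⁻ x, g (x - y) * f x * f y = (∫⁻ x, g (x - y) * f x) * f y := by
      intro y
      exact lintegral_mul_const (f y)
        ((hgm.comp (measurable_id.sub measurable_const)).mul hf)
    calc ∫⁻ y, ∫⁻ x, g (x - y) * f x * f y
        = ∫⁻ y, (∫⁻ x, g (x - y) * f x) * f y := lintegral_congr e1
      _ ≤ ∫⁻ y, (A * B) * f y := lintegral_mono fun y => mul_le_mul_left (key y) (f y)
      _ = A * B * ∫⁻ x, f x := lintegral_const_mul (A * B) hf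
  refine le_trans step2 ?_
  -- identifications
  have hI2 : ∫⁻ x, f x = eLpNorm u 2 volume ^ 2 := by
    rw [eLpNorm_eq_lintegral_rpow_enorm_toReal (by norm_num) (by norm_num)]
    rw [← ENNReal.rpow_natCast _ 2, ← ENNReal.rpow_mul]
    norm_num [h22, hfdef, enorm_eq_nnnorm]
  have hB : B = eLpNorm u 4 volume ^ 2 := by
    have h4 : ∀ x : E2, f x ^ 2 = (‖u x‖₊ : ℝ≥0∞) ^ (4:ℝ) := fun x => by
      rw [hfdef, ← pow_mul, ← ENNReal.rpow_natCast]
      norm_num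
    rw [hBdef, eLpNorm_eq_lintegral_rpow_enorm_toReal (by norm_num) (by norm_num),
      ← ENNReal.rpow_natCast _ 2, ← ENNReal.rpow_mul]
    simp_rw [h4]
    norm_num [enorm_eq_nnnorm]
  have hA : A ≤ ENNReal.ofReal
      ((∫ x in {x : E2 | ‖x‖ ≤ 1}, (Real.log ‖x‖) ^ 2) ^ (1 / 2 : ℝ)) := by
    have hle : ∫⁻ w, g w ^ 2
        ≤ ENNReal.ofReal (∫ x in {x : E2 | ‖x‖ ≤ 1}, (Real.log ‖x‖) ^ 2) := by
      have e1 : (fun w => g w ^ 2)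
          = ({w : E2 | ‖w‖ < 1}).indicator (fun w => ENNReal.ofReal ((Real.log ‖w‖) ^ 2)) := by
        funext w
        by_cases h : ‖w‖ < 1 <;>
          simp [hgdef, Set.indicator_apply, Set.mem_setOf_eq, h,
            ← ENNReal.ofReal_pow (abs_nonneg _), sq_abs]
      rw [e1, lintegral_indicator hlt]
      have hsub : {w : E2 | ‖w‖ < 1} ⊆ {x : E2 | ‖x‖ ≤ 1} := by
        intro w hw
        simp only [Set.mem_setOf_eq] at *
        exact hw.le
      refine le_trans (lintegral_mono_set hsub) ?_
      rw [ofReal_integral_eq_lintegral_ofReal log_sq_integrable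
        (Filter.Eventually.of_forall fun x => sq_nonneg _)]
    calc A ≤ (ENNReal.ofReal (∫ x in {x : E2 | ‖x‖ ≤ 1}, (Real.log ‖x‖) ^ 2)) ^ (1/2:ℝ) :=
        ENNReal.rpow_le_rpow hle (by norm_num)
      _ = _ := by
        rw [← ENNReal.ofReal_rpow_of_nonneg
          (integral_nonneg fun x => sq_nonneg _) (by norm_num)]
  calc A * B * ∫⁻ x, f x
      ≤ ENNReal.ofReal ((∫ x in {x : E2 | ‖x‖ ≤ 1}, (Real.log ‖x‖) ^ 2) ^ (1 / 2 : ℝ)) *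
        (eLpNorm u 4 volume ^ 2) * (eLpNorm u 2 volume ^ 2) :=
      mul_le_mul' (mul_le_mul' hA hB.le) hI2.le
    _ = _ := rfl
end
end

section
/- Let p ∈ (1,∞). There exists a constant C = C(p) such that for every u ∈ C_c^∞(ℝ²;ℂ), ‖u‖_{L^{p+1}(ℝ²)}^{p+1} ≤ C ‖u‖_{L²(ℝ²)}² ‖∇u‖_{L²(ℝ²)}^{p−1} (a two-dimensional Gagliardo–Nirenberg inequality). -/
open MeasureTheory ENNReal NNReal

noncomputable section

lemma my_aux_fin {g : E2 → ℝ} (hg : Continuous g) (h2 : HasCompactSupport g) :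
    ∫⁻ x, ENNReal.ofReal (g x) ≠ ⊤ := by
  have h := (hg.integrable_of_hasCompactSupport h2 (μ := volume)).hasFiniteIntegral
  refine ne_of_lt (lt_of_le_of_lt (lintegral_mono fun x => ?_) h)
  exact Real.ofReal_le_enorm _

lemma my_lint_aux {F : Type*} [NormedAddCommGroup F] (v : E2 → F) (hv : Continuous v)
    (h2v : HasCompactSupport v) {s : ℝ} (hs : 0 < s) :
    (∫⁻ x, (‖v x‖₊ : ℝ≥0∞) ^ s) ≠ ⊤ ∧
      (∫⁻ x, (‖v x‖₊ : ℝ≥0∞) ^ s).toReal = ∫ x, ‖v x‖ ^ s := by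
  have hg : Continuous (fun x => ‖v x‖ ^ s) := hv.norm.rpow_const (fun x => Or.inr hs.le)
  have h2g : HasCompactSupport (fun x => ‖v x‖ ^ s) := by
    have h : (fun x : E2 => ‖v x‖ ^ s) = (fun z : F => ‖z‖ ^ s) ∘ v := rfl
    rw [h]
    exact h2v.comp_left (by simp [Real.zero_rpow hs.ne'])
  have heq : ∀ x, (‖v x‖₊ : ℝ≥0∞) ^ s = ENNReal.ofReal (‖v x‖ ^ s) := fun x => by
    rw [← enorm_eq_nnnorm, ← ofReal_norm, ← ENNReal.ofReal_rpow_of_nonneg (norm_nonneg _) hs.le]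
  constructor
  · rw [lintegral_congr heq]
    exact my_aux_fin hg h2g
  · rw [lintegral_congr heq,
      ← integral_eq_lintegral_of_nonneg_ae (ae_of_all _ fun x => by positivity)
        hg.aestronglyMeasurable]

lemma my_absorb {X A : ℝ≥0∞} (hX : X ≠ ⊤) {lam : ℝ} (h0 : 0 < lam)
    (h : X ≤ A * X ^ (1 - lam)) : X ≤ A ^ (1/lam) := by
  rcases eq_or_ne X 0 with h0X | h0X
  · simp [h0X]
  have hne : X ^ (1 - lam) ≠ 0 := by
    simp [ENNReal.rpow_eq_zero_iff, h0X, hX]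
  have hnt : X ^ (1 - lam) ≠ ⊤ := by
    simp [ENNReal.rpow_eq_top_iff, h0X, hX]
  have key : X ^ lam * X ^ (1 - lam) ≤ A * X ^ (1 - lam) := by
    rwa [← ENNReal.rpow_add _ _ h0X hX, add_sub_cancel, ENNReal.rpow_one]
  have h2 : X ^ lam ≤ A := (ENNReal.mul_le_mul_iff_left hne hnt).mp key
  calc X = (X ^ lam) ^ (1/lam) := by
        rw [← ENNReal.rpow_mul, mul_one_div, div_self h0.ne', ENNReal.rpow_one]
    _ ≤ A ^ (1/lam) := ENNReal.rpow_le_rpow h2 (by positivity)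

lemma my_interp (f : E2 → ℝ≥0) (hf : AEMeasurable (fun x => (f x : ℝ≥0∞)) volume) {q r : ℝ}
    (h2q : 2 ≤ q) (hqr : q ≤ r) (h2r : 2 < r) :
    ∫⁻ x, (f x : ℝ≥0∞) ^ q ≤
      (∫⁻ x, (f x : ℝ≥0∞) ^ (2:ℝ)) ^ ((r-q)/(r-2)) *
        (∫⁻ x, (f x : ℝ≥0∞) ^ r) ^ ((q-2)/(r-2)) := by
  rcases eq_or_lt_of_le h2q with h2q' | h2q'
  · rw [← h2q', sub_self, zero_div, ENNReal.rpow_zero, mul_one, div_self (by linarith),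
      ENNReal.rpow_one]
  rcases eq_or_lt_of_le hqr with hqr' | hqr'
  · rw [hqr', sub_self, zero_div, ENNReal.rpow_zero, one_mul, div_self (by linarith),
      ENNReal.rpow_one]
  set lam : ℝ := (r-q)/(r-2) with hlam
  have h0 : 0 < lam := by apply div_pos <;> linarith
  have h1 : lam < 1 := by rw [hlam, div_lt_one (by linarith)]; linarith
  have hconj : Real.HolderConjugate (1/lam) (1/(1-lam)) := by
    rw [Real.holderConjugate_iff]
    constructor
    · rw [lt_div_iff₀ h0]; linarith
    · rw [one_div, one_div, inv_inv, inv_inv]; ring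
  have hne : (1:ℝ) - lam ≠ 0 := by linarith
  have hne2 : r - 2 ≠ 0 := by linarith
  have hmul : lam * (r-2) = r - q := by rw [hlam]; field_simp
  have e2 : 2 * lam * (1/lam) = 2 := by field_simp
  have e3 : r * (1-lam) * (1/(1-lam)) = r := by
    rw [mul_one_div, mul_div_assoc, div_self hne, mul_one]
  have e4 : 2 * lam + r * (1-lam) = q := by linear_combination -hmul
  have e5 : 1 - lam = (q-2)/(r-2) := by
    rw [eq_div_iff hne2, sub_mul, one_mul, hmul]; ring
  have key := ENNReal.lintegral_mul_le_Lp_mul_Lq volume hconj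
    (f := fun x => (f x : ℝ≥0∞) ^ (2*lam)) (g := fun x => (f x : ℝ≥0∞) ^ (r*(1-lam)))
    (hf.pow_const _) (hf.pow_const _)
  simp only [Pi.mul_apply, one_div_one_div] at key
  calc ∫⁻ x, (f x : ℝ≥0∞) ^ q
      = ∫⁻ x, (f x : ℝ≥0∞) ^ (2*lam) * (f x : ℝ≥0∞) ^ (r*(1-lam)) := by
        refine lintegral_congr fun x => ?_
        rw [← ENNReal.rpow_add_of_nonneg _ _ (by positivity)
          (mul_nonneg (by linarith) (by linarith)), e4]
    _ ≤ (∫⁻ x, ((f x : ℝ≥0∞) ^ (2*lam)) ^ (1/lam)) ^ lam *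
        (∫⁻ x, ((f x : ℝ≥0∞) ^ (r*(1-lam))) ^ (1/(1-lam))) ^ (1-lam) := key
    _ = _ := by
        rw [← e5]
        congr 2
        · refine lintegral_congr fun x => ?_
          rw [← ENNReal.rpow_mul, e2]
        · refine lintegral_congr fun x => ?_
          rw [← ENNReal.rpow_mul, e3]

lemma my_conj22 : Real.HolderConjugate 2 2 := Real.holderConjugate_iff.mpr ⟨one_lt_two, by norm_num⟩

lemma my_sob_step (u : E2 → ℂ) (hu : ContDiff ℝ (⊤ : ℕ∞) u) (h2u : HasCompactSupport u) {t : ℝ}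
    (ht : 1 < t) :
    ∫⁻ x, (‖u x‖₊ : ℝ≥0∞) ^ (2*t) ≤
      ((lintegralPowLePowLIntegralFDerivConst (volume : Measure E2) 2 : ℝ≥0∞) *
          ENNReal.ofReal t ^ (2:ℝ)) *
        ((∫⁻ x, (‖u x‖₊ : ℝ≥0∞) ^ (2*t-2)) *
          (∫⁻ x, (‖fderiv ℝ u x‖₊ : ℝ≥0∞) ^ (2:ℝ))) := by
  have hu1 : ContDiff ℝ 1 u := hu.of_le (by simp)
  have hud : Differentiable ℝ u := hu1.differentiable one_ne_zero
  set v : E2 → ℝ := fun x => ‖u x‖ ^ t with hv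
  have hvc : ContDiff ℝ 1 v := hu1.norm_rpow ht
  have h2v : HasCompactSupport v := by
    have h : v = (fun s : ℂ => ‖s‖ ^ t) ∘ u := rfl
    rw [h]
    exact h2u.comp_left (by simp [Real.zero_rpow (by positivity : t ≠ 0)])
  have hconj : Real.HolderConjugate (Module.finrank ℝ E2 : ℝ) 2 := by
    rw [finrank_euclideanSpace_fin]; exact_mod_cast my_conj22
  have sob := lintegral_pow_le_pow_lintegral_fderiv (volume : Measure E2) hvc h2v hconj
  have hL : ∫⁻ x, (‖v x‖₊ : ℝ≥0∞) ^ (2:ℝ) = ∫⁻ x, (‖u x‖₊ : ℝ≥0∞) ^ (2*t) := by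
    refine lintegral_congr fun x => ?_
    rw [← enorm_eq_nnnorm, ← enorm_eq_nnnorm, ← ofReal_norm, ← ofReal_norm, hv]
    rw [Real.norm_eq_abs, abs_of_nonneg (by positivity),
      ← ENNReal.ofReal_rpow_of_nonneg (norm_nonneg _) (by positivity),
      ← ENNReal.rpow_mul, mul_comm t 2]
  simp only [enorm_eq_nnnorm] at sob
  rw [hL] at sob
  refine sob.trans ?_
  have hmeas1 : AEMeasurable (fun x => (‖u x‖₊ : ℝ≥0∞) ^ (t-1)) volume :=
    (hu.continuous.measurable.nnnorm.coe_nnreal_ennreal.pow_const _).aemeasurable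
  have hmeas2 : AEMeasurable (fun x => (‖fderiv ℝ u x‖₊ : ℝ≥0∞)) volume :=
    ((hu.continuous_fderiv (by simp)).measurable.nnnorm.coe_nnreal_ennreal).aemeasurable
  have step1 : ∫⁻ x, (‖fderiv ℝ v x‖₊ : ℝ≥0∞) ≤
      ENNReal.ofReal t * ∫⁻ x, (‖u x‖₊ : ℝ≥0∞) ^ (t-1) * (‖fderiv ℝ u x‖₊ : ℝ≥0∞) := by
    rw [← lintegral_const_mul' _ _ ENNReal.ofReal_ne_top]
    refine lintegral_mono fun x => ?_
    have hb := norm_fderiv_norm_rpow_le hud (x := x) ht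
    calc (‖fderiv ℝ v x‖₊ : ℝ≥0∞) = ENNReal.ofReal ‖fderiv ℝ v x‖ :=
          (ofReal_norm _).symm
      _ ≤ ENNReal.ofReal (t * ‖u x‖ ^ (t-1) * ‖fderiv ℝ u x‖) := ENNReal.ofReal_le_ofReal hb
      _ = ENNReal.ofReal t * ((‖u x‖₊ : ℝ≥0∞) ^ (t-1) * (‖fderiv ℝ u x‖₊ : ℝ≥0∞)) := by
          rw [ENNReal.ofReal_mul (by positivity), ENNReal.ofReal_mul (by positivity),
            ← ENNReal.ofReal_rpow_of_nonneg (norm_nonneg _) (by linarith),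
            ofReal_norm, ofReal_norm, enorm_eq_nnnorm, enorm_eq_nnnorm, mul_assoc]
  have step2 : ∫⁻ x, (‖u x‖₊ : ℝ≥0∞) ^ (t-1) * (‖fderiv ℝ u x‖₊ : ℝ≥0∞) ≤
      (∫⁻ x, (‖u x‖₊ : ℝ≥0∞) ^ (2*t-2)) ^ (1/2:ℝ) *
        (∫⁻ x, (‖fderiv ℝ u x‖₊ : ℝ≥0∞) ^ (2:ℝ)) ^ (1/2:ℝ) := by
    have key := ENNReal.lintegral_mul_le_Lp_mul_Lq volume my_conj22 hmeas1 hmeas2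
    simp only [Pi.mul_apply] at key
    refine key.trans_eq ?_
    congr 2
    refine lintegral_congr fun x => ?_
    rw [← ENNReal.rpow_mul]
    congr 1
    ring
  have hbound : (∫⁻ x, (‖fderiv ℝ v x‖₊ : ℝ≥0∞)) ^ (2:ℝ) ≤
      ENNReal.ofReal t ^ (2:ℝ) * ((∫⁻ x, (‖u x‖₊ : ℝ≥0∞) ^ (2*t-2)) *
        (∫⁻ x, (‖fderiv ℝ u x‖₊ : ℝ≥0∞) ^ (2:ℝ))) := by
    calc (∫⁻ x, (‖fderiv ℝ v x‖₊ : ℝ≥0∞)) ^ (2:ℝ)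
        ≤ (ENNReal.ofReal t * ((∫⁻ x, (‖u x‖₊ : ℝ≥0∞) ^ (2*t-2)) ^ (1/2:ℝ) *
            (∫⁻ x, (‖fderiv ℝ u x‖₊ : ℝ≥0∞) ^ (2:ℝ)) ^ (1/2:ℝ))) ^ (2:ℝ) := by
          refine ENNReal.rpow_le_rpow ?_ (by norm_num)
          exact step1.trans (mul_le_mul_right step2 _)
      _ = ENNReal.ofReal t ^ (2:ℝ) * ((∫⁻ x, (‖u x‖₊ : ℝ≥0∞) ^ (2*t-2)) *
            (∫⁻ x, (‖fderiv ℝ u x‖₊ : ℝ≥0∞) ^ (2:ℝ))) := by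
          rw [ENNReal.mul_rpow_of_nonneg _ _ (by norm_num : (0:ℝ) ≤ 2),
            ENNReal.mul_rpow_of_nonneg _ _ (by norm_num : (0:ℝ) ≤ 2), ← ENNReal.rpow_mul,
            ← ENNReal.rpow_mul]
          norm_num
  rw [mul_assoc]
  exact mul_le_mul_right hbound _

/-- A two-dimensional Gagliardo–Nirenberg inequality: for `p ∈ (1,∞)` there is
`C = C(p)` such that for every `u ∈ C_c^∞(ℝ²;ℂ)`,
`‖u‖_{L^{p+1}}^{p+1} ≤ C ‖u‖_{L²}² ‖∇u‖_{L²}^{p−1}`. -/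
theorem stmt13 (p : ℝ) (hp : 1 < p) :
    ∃ C : ℝ, 0 ≤ C ∧ ∀ u : E2 → ℂ, ContDiff ℝ (⊤ : ℕ∞) u → HasCompactSupport u →
      (∫ x, ‖u x‖ ^ (p + 1)) ≤
        C * (∫ x, ‖u x‖ ^ 2) *
          ((∫ x, ‖fderiv ℝ u x‖ ^ 2) ^ (1 / 2 : ℝ)) ^ (p - 1) := by
  set C₀ : ℝ≥0∞ := (lintegralPowLePowLIntegralFDerivConst (volume : Measure E2) 2 : ℝ≥0∞)
    with hC₀
  set tm : ℝ := max 2 ((p+1)/2) with htm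
  have htm1 : 1 < tm := lt_of_lt_of_le one_lt_two (le_max_left _ _)
  set K : ℝ≥0∞ := C₀ * ENNReal.ofReal tm ^ (2:ℝ) with hKdef
  have hKtop : K ≠ ⊤ :=
    ENNReal.mul_ne_top ENNReal.coe_ne_top
      (ENNReal.rpow_ne_top_of_nonneg (by norm_num) ENNReal.ofReal_ne_top)
  set e : ℝ := (p-1)/2 with he
  have he0 : 0 ≤ e := by rw [he]; apply div_nonneg <;> linarith
  refine ⟨(K ^ e).toReal, ENNReal.toReal_nonneg, fun u hu h2u => ?_⟩
  have huc : Continuous u := hu.continuous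
  have hnn : AEMeasurable (fun x => (‖u x‖₊ : ℝ≥0∞)) volume :=
    (huc.measurable.nnnorm.coe_nnreal_ennreal).aemeasurable
  set J : ℝ → ℝ≥0∞ := fun s => ∫⁻ x, (‖u x‖₊ : ℝ≥0∞) ^ s with hJ
  set D : ℝ≥0∞ := ∫⁻ x, (‖fderiv ℝ u x‖₊ : ℝ≥0∞) ^ (2:ℝ) with hD
  -- facts
  have hfd : Continuous (fderiv ℝ u) := hu.continuous_fderiv (by simp)
  have hfd2 : HasCompactSupport (fderiv ℝ u) := (h2u.fderiv (𝕜 := ℝ))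
  obtain ⟨hDfin, hDeq⟩ := my_lint_aux (fderiv ℝ u) hfd hfd2 (two_pos)
  obtain ⟨hJ2fin, hJ2eq⟩ := my_lint_aux u huc h2u (two_pos)
  obtain ⟨hJp1fin, hJp1eq⟩ := my_lint_aux u huc h2u (by linarith : (0:ℝ) < p + 1)
  -- main ENNReal estimate
  have main : J (p+1) ≤ K ^ e * J 2 * D ^ e := by
    rcases le_or_gt p 3 with hp3 | hp3
    -- case p ≤ 3 : Ladyzhenskaya + downward interpolation
    · have hK2 : (C₀ * ENNReal.ofReal 2 ^ (2:ℝ)) ≤ K := by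
        rw [hKdef]
        exact mul_le_mul_right
          (ENNReal.rpow_le_rpow (ENNReal.ofReal_le_ofReal (le_max_left _ _)) (by norm_num)) _
      have lad : J 4 ≤ K * (J 2 * D) := by
        have h := my_sob_step u hu h2u (t := 2) one_lt_two
        rw [show (2:ℝ)*2-2 = 2 by norm_num, show (2:ℝ)*2 = 4 by norm_num] at h
        exact h.trans (mul_le_mul_left hK2 _)
      have int : J (p+1) ≤ J 2 ^ ((3-p)/2) * J 4 ^ e := by
        have h := my_interp (fun x => ‖u x‖₊) hnn (q := p+1) (r := 4)
          (by linarith) (by linarith) (by norm_num)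
        rw [show (4:ℝ)-(p+1) = 3-p by ring, show (4:ℝ)-2 = 2 by norm_num,
          show (p+1)-2 = p-1 by ring] at h
        exact h
      calc J (p+1) ≤ J 2 ^ ((3-p)/2) * J 4 ^ e := int
        _ ≤ J 2 ^ ((3-p)/2) * (K * (J 2 * D)) ^ e :=
            mul_le_mul_right (ENNReal.rpow_le_rpow lad he0) _
        _ = K ^ e * (J 2 ^ ((3-p)/2) * J 2 ^ e) * D ^ e := by
            rw [ENNReal.mul_rpow_of_nonneg K (J 2 * D) he0,
              ENNReal.mul_rpow_of_nonneg (J 2) D he0]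
            ring
        _ = K ^ e * J 2 * D ^ e := by
            rw [← ENNReal.rpow_add_of_nonneg _ _ (by linarith) he0,
              show (3-p)/2 + e = 1 by rw [he]; ring, ENNReal.rpow_one]
    -- case p > 3 : higher Sobolev step + absorption
    · set t : ℝ := (p+1)/2 with htdef
      have ht : 1 < t := by rw [htdef]; linarith
      have hKt : (C₀ * ENNReal.ofReal t ^ (2:ℝ)) ≤ K := by
        rw [hKdef]
        exact mul_le_mul_right
          (ENNReal.rpow_le_rpow (ENNReal.ofReal_le_ofReal (le_max_right _ _)) (by norm_num)) _
      have sob : J (p+1) ≤ K * (J (p-1) * D) := by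
        have h := my_sob_step u hu h2u ht
        rw [show 2*t-2 = p-1 by rw [htdef]; ring, show 2*t = p+1 by rw [htdef]; ring] at h
        exact h.trans (mul_le_mul_left hKt _)
      set lam : ℝ := 2/(p-1) with hlam
      have hlam0 : 0 < lam := by rw [hlam]; exact div_pos two_pos (by linarith)
      have int : J (p-1) ≤ J 2 ^ lam * J (p+1) ^ (1-lam) := by
        have h := my_interp (fun x => ‖u x‖₊) hnn (q := p-1) (r := p+1)
          (by linarith) (by linarith) (by linarith)
        rw [show (p+1)-(p-1) = 2 by ring, show (p+1)-2 = p-1 by ring] at h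
        have hne : p - 1 ≠ 0 := by linarith
        refine h.trans_eq ?_
        congr 2
        rw [hlam, eq_sub_iff_add_eq, ← add_div, show p-1-2+2 = p-1 by ring,
          div_self hne]
      have habs : J (p+1) ≤ (K * J 2 ^ lam * D) ^ (1/lam) := by
        refine my_absorb hJp1fin hlam0 ?_
        calc J (p+1) ≤ K * (J (p-1) * D) := sob
          _ ≤ K * ((J 2 ^ lam * J (p+1) ^ (1-lam)) * D) :=
              mul_le_mul_right (mul_le_mul_left int _) _
          _ = K * J 2 ^ lam * D * J (p+1) ^ (1-lam) := by ring
      refine habs.trans_eq ?_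
      have h1lam : 1/lam = e := by
        rw [hlam, he, one_div_div]
      have hlame : lam * e = 1 := by
        rw [hlam, he, div_mul_div_comm,
          div_eq_one_iff_eq (by nlinarith : (p-1)*2 ≠ 0)]
        ring
      rw [h1lam, ENNReal.mul_rpow_of_nonneg _ _ he0, ENNReal.mul_rpow_of_nonneg _ _ he0,
        ← ENNReal.rpow_mul, hlame, ENNReal.rpow_one]
  -- pass to real integrals
  have hRfin : K ^ e * J 2 * D ^ e ≠ ⊤ :=
    ENNReal.mul_ne_top
      (ENNReal.mul_ne_top (ENNReal.rpow_ne_top_of_nonneg he0 hKtop) hJ2fin)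
      (ENNReal.rpow_ne_top_of_nonneg he0 hDfin)
  have hreal := ENNReal.toReal_mono hRfin main
  rw [ENNReal.toReal_mul, ENNReal.toReal_mul] at hreal
  have hpow2 : ∀ y : ℝ, y ^ ((2:ℝ)) = y ^ (2:ℕ) := fun y => by
    rw [show (2:ℝ) = ((2:ℕ):ℝ) by norm_num, Real.rpow_natCast]
  have hL : (J (p+1)).toReal = ∫ x, ‖u x‖ ^ (p+1) := hJp1eq
  have h2 : (J 2).toReal = ∫ x, ‖u x‖ ^ (2:ℕ) := by
    rw [hJ2eq]
    exact integral_congr_ae (ae_of_all _ fun x => hpow2 _)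
  have hDr : (D ^ e).toReal = ((∫ x, ‖fderiv ℝ u x‖ ^ (2:ℕ)) ^ (1/2:ℝ)) ^ (p-1) := by
    have hDtr : D.toReal = ∫ x, ‖fderiv ℝ u x‖ ^ (2:ℕ) := by
      rw [hDeq]
      exact integral_congr_ae (ae_of_all _ fun x => hpow2 _)
    rw [← ENNReal.toReal_rpow, hDtr,
      ← Real.rpow_mul (integral_nonneg fun x => by positivity)]
    congr 1
    rw [he]; ring
  rw [hL, h2, hDr] at hreal
  exact hreal

end
end
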